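/- arXiv:0907.5356 — 7 statements merged into one kernel-verified Lean document; each statement's English description precedes it below -/
import Mathlib

section
/- In the combinatorial Clifford algebra Cl(X,R,r), for any subsets A, B ⊆ X the basis elements satisfy AB = (−1)^{|A|(|A|−1)/2 + |B|(|B|−1)/2 + |A△B|(|A△B|−1)/2} BA. -/
open scoped Classical

/-- `τ` is a grassmannian map on the finite set `X` with signature `r`
(properties (i)–(v) of the Lemma). -/
def Grassmannian {X : Type*} [DecidableEq X] {R : Type*} [CommRing R]
    (r : X → R) (τ : Finset X → Finset X → R) : Prop :=
  (∀ x : X, τ {x} {x} = r x) ∧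
  (∀ x y : X, x ≠ y → τ {x} {y} = - τ {y} {x}) ∧
  (∀ A : Finset X, τ (∅ : Finset X) A = 1 ∧ τ A (∅ : Finset X) = 1) ∧
  (∀ A B C : Finset X, τ A B * τ (symmDiff A B) C = τ A (symmDiff B C) * τ B C) ∧
  (∀ A B : Finset X, A ∩ B = ∅ → τ A B = 1 ∨ τ A B = -1)

/-- The Clifford product on `Cl(X,R,r) = ⊕_{P(X)} R`, defined on basis elements by
`A·B := τ(A,B) (A △ B)` and extended bilinearly. -/
noncomputable def clMul {X : Type*} [DecidableEq X] {R : Type*} [CommRing R]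
    (τ : Finset X → Finset X → R) (f g : Finset X →₀ R) : Finset X →₀ R :=
  f.sum fun A a => g.sum fun B b => Finsupp.single (symmDiff A B) (a * b * τ A B)


private lemma two_mul_tri (n : ℕ) : 2 * ((n+1)*n/2) = (n+1)*n :=
  Nat.mul_div_cancel' (even_iff_two_dvd.mp (by simpa [mul_comm] using Nat.even_mul_succ_self n))

private lemma c2_add (u v : ℕ) : (u+v)*((u+v)-1)/2 = u*(u-1)/2 + v*(v-1)/2 + u*v := by
  match u, v with
  | 0, v => simp
  | u+1, 0 => simp
  | u+1, v+1 =>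
    have e : u+1+(v+1) = (u+v+1)+1 := by ring
    rw [e, Nat.succ_sub_one, Nat.add_sub_cancel, Nat.add_sub_cancel]
    have ha := two_mul_tri (u+v+1)
    have hb := two_mul_tri u
    have hc := two_mul_tri v
    have hd : (u+v+1+1)*(u+v+1) = (u+1)*u + (v+1)*v + 2*((u+1)*(v+1)) := by ring
    generalize (u+v+1+1)*(u+v+1)/2 = Xa at ha ⊢
    generalize (u+1)*u/2 = Xb at hb ⊢
    generalize (v+1)*v/2 = Xc at hc ⊢
    generalize (u+v+1+1)*(u+v+1) = Pa at ha hd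
    generalize (u+1)*u = Pb at hb hd
    generalize (v+1)*v = Pc at hc hd
    generalize (u+1)*(v+1) = Pd at hd ⊢
    omega

private lemma parity_lemma {R : Type*} [CommRing R] (a b c m : ℕ)
    (hm : m + 2*c = a + b) (hca : c ≤ a) (hcb : c ≤ b) :
    ((-1:R))^(a*(a-1)/2 + b*(b-1)/2 + m*(m-1)/2) = (-1:R)^(a*b + c) := by
  obtain ⟨d, rfl⟩ : ∃ d, a = c + d := ⟨a - c, by omega⟩
  obtain ⟨e, rfl⟩ : ∃ e, b = c + e := ⟨b - c, by omega⟩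
  obtain rfl : m = d + e := by omega
  rw [c2_add c d, c2_add c e, c2_add d e]
  rw [neg_one_pow_eq_pow_mod_two, neg_one_pow_eq_pow_mod_two ((c+d)*(c+e) + c)]
  congr 1
  have hexp : (c+d)*(c+e) = c*c + c*e + c*d + d*e := by ring
  rw [hexp]
  have hcc : Even (c*c + c) := by
    have h := Nat.even_mul_succ_self c
    rwa [show c*(c+1) = c*c+c from by ring] at h
  obtain ⟨t, ht⟩ := hcc
  generalize c*(c-1)/2 = P at *
  generalize d*(d-1)/2 = Q at *
  generalize e*(e-1)/2 = Y at *
  generalize c*d = G1 at *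
  generalize c*e = G2 at *
  generalize d*e = G3 at *
  generalize c*c = Z at *
  omega

section Aux
variable {X : Type*} [DecidableEq X] {R : Type*} [CommRing R]

private lemma sq_one {a : R} (h : a = 1 ∨ a = -1) : a * a = 1 := by
  rcases h with h | h <;> rw [h] <;> ring

private lemma sd_not_mem (s : Finset X) (y : X) (h : y ∉ s) :
    symmDiff ({y} : Finset X) s = insert y s := by
  ext a; simp only [Finset.mem_symmDiff, Finset.mem_insert, Finset.mem_singleton]
  by_cases hay : a = y <;> subst_eqs <;> simp_all

private lemma sd_mem (s : Finset X) (y : X) (h : y ∈ s) :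
    symmDiff ({y} : Finset X) s = s.erase y := by
  ext a; simp only [Finset.mem_symmDiff, Finset.mem_erase, Finset.mem_singleton]
  by_cases hay : a = y <;> subst_eqs <;> simp_all

private lemma card_sd (s t : Finset X) : (symmDiff s t).card + 2 * (s ∩ t).card = s.card + t.card := by
  have hd : symmDiff s t = (s \ t) ∪ (t \ s) := by rw [symmDiff_def, Finset.sup_eq_union]
  rw [hd, Finset.card_union_of_disjoint disjoint_sdiff_sdiff]
  have h1 := Finset.card_sdiff_add_card_inter s t
  have h2 := Finset.card_sdiff_add_card_inter t s
  rw [Finset.inter_comm t s] at h2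
  omega

private lemma neg_one_sq_pow (n : ℕ) : (-1:R)^n * (-1:R)^n = 1 := by
  rw [← pow_add]; exact Even.neg_one_pow ⟨n, rfl⟩

private lemma tau_singleton {r : X → R} {τ : Finset X → Finset X → R} (hτ : Grassmannian r τ) :
    ∀ (n : ℕ) (B : Finset X) (x : X), B.card = n →
      τ {x} B = (-1:R)^(n + if x ∈ B then 1 else 0) * τ B {x} := by
  obtain ⟨hr, hanti, hone, hco, hdisj⟩ := hτ
  intro n
  induction n using Nat.strong_induction_on with
  | _ n ih =>
  match n with
  | 0 =>
    intro B x hB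
    obtain rfl := Finset.card_eq_zero.mp hB
    simp [(hone {x}).2, (hone {x}).1]
  | 1 =>
    intro B x hB
    obtain ⟨y, rfl⟩ := Finset.card_eq_one.mp hB
    by_cases hxy : x = y
    · subst hxy; simp
    · rw [hanti x y hxy]
      simp [Finset.mem_singleton, hxy]
  | (m+2) =>
    intro B x hB
    obtain ⟨y, hyB, hyx⟩ := Finset.exists_mem_ne (show 1 < B.card by omega) x
    have hyB' : y ∉ B.erase y := Finset.notMem_erase y B
    have hBcard' : (B.erase y).card = m + 1 := by
      rw [Finset.card_erase_of_mem hyB, hB]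
      omega
    have hins : insert y (B.erase y) = B := Finset.insert_erase hyB
    have sd1 : symmDiff ({y} : Finset X) (B.erase y) = B := by
      rw [sd_not_mem _ _ hyB', hins]
    have sd2 : symmDiff (B.erase y) ({y} : Finset X) = B := by
      rw [symmDiff_comm]; exact sd1
    have hu : τ (B.erase y) {y} * τ (B.erase y) {y} = 1 :=
      sq_one (hdisj _ _ (Finset.inter_singleton_of_notMem hyB'))
    have hu' : τ {y} (B.erase y) * τ {y} (B.erase y) = 1 :=
      sq_one (hdisj _ _ (Finset.singleton_inter_of_notMem hyB'))
    have hs : (-1:R)^m * (-1:R)^m = 1 := neg_one_sq_pow m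
    by_cases hx : x ∈ B
    · -- x ∈ B
      have hxB' : x ∈ B.erase y := Finset.mem_erase.mpr ⟨fun h => hyx h.symm, hx⟩
      have hE1 : symmDiff ({x} : Finset X) (B.erase y) = (B.erase y).erase x :=
        sd_mem _ _ hxB'
      have hE2 : symmDiff (B.erase y) ({x} : Finset X) = (B.erase y).erase x := by
        rw [symmDiff_comm]; exact hE1
      have hEcard : ((B.erase y).erase x).card = m := by
        rw [Finset.card_erase_of_mem hxB', hBcard']
        omega
      have hyE : y ∉ (B.erase y).erase x := fun hmem => hyB' (Finset.mem_of_mem_erase hmem)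
      have hA := hco {x} (B.erase y) {y}
      rw [hE1, sd2] at hA
      have hB2 := hco {y} (B.erase y) {x}
      rw [sd1, hE2] at hB2
      have ih1 := ih (m+1) (by omega) (B.erase y) y hBcard'
      rw [if_neg hyB'] at ih1
      have ih2 := ih m (by omega) ((B.erase y).erase x) y hEcard
      rw [if_neg hyE] at ih2
      have ih3 := ih (m+1) (by omega) (B.erase y) x hBcard'
      rw [if_pos hxB'] at ih3
      rw [if_pos hx]
      simp only [add_zero, pow_succ] at ih1 ih2 ih3 ⊢
      rw [ih1, ih2] at hB2
      generalize (-1:R)^m = s at ih3 hs hB2 ⊢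
      have hp : τ {x} B = τ {x} (B.erase y) * τ ((B.erase y).erase x) {y} * τ (B.erase y) {y} := by
        linear_combination (-(τ (B.erase y) {y})) * hA + (-(τ {x} B)) * hu
      have hq : τ B {x} = -(τ (B.erase y) {y} * (τ ((B.erase y).erase x) {y} * τ (B.erase y) {x})) := by
        linear_combination (-(s * τ (B.erase y) {y})) * hB2
          + (-(τ (B.erase y) {y} * τ (B.erase y) {y} * τ B {x}
              + τ (B.erase y) {y} * τ ((B.erase y).erase x) {y} * τ (B.erase y) {x})) * hs
          + (-(τ B {x})) * hu
      rw [hp, hq, ih3]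
      ring
    · -- x ∉ B
      have hxB' : x ∉ B.erase y := fun hmem => hx (Finset.mem_of_mem_erase hmem)
      have hxy : x ≠ y := fun h => hyx h.symm
      have hI1 : symmDiff ({x} : Finset X) (B.erase y) = insert x (B.erase y) :=
        sd_not_mem _ _ hxB'
      have hI2 : symmDiff (B.erase y) ({x} : Finset X) = insert x (B.erase y) := by
        rw [symmDiff_comm]; exact hI1
      have hsdxy : symmDiff ({y} : Finset X) ({x} : Finset X) = symmDiff ({x} : Finset X) ({y} : Finset X) :=
        symmDiff_comm _ _
      have c1 := hco {x} {y} (B.erase y)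
      rw [sd1] at c1
      have c2 := hco {y} {x} (B.erase y)
      rw [hsdxy, hI1] at c2
      have c3 := hco {y} (B.erase y) {x}
      rw [sd1, hI2] at c3
      have hanti' := hanti x y hxy
      have ihv := ih (m+1) (by omega) (B.erase y) x hBcard'
      rw [if_neg hxB'] at ihv
      rw [if_neg hx]
      simp only [add_zero, pow_succ] at ihv ⊢
      generalize (-1:R)^m = s at ihv hs ⊢
      have hp : τ {x} B = τ {y} (B.erase y) * (τ {x} {y} * τ (symmDiff ({x}:Finset X) {y}) (B.erase y)) := by
        linear_combination (-(τ {y} (B.erase y))) * c1 + (-(τ {x} B)) * hu'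
      have hq : τ B {x} = τ {y} (B.erase y) * (τ {y} (insert x (B.erase y)) * τ (B.erase y) {x}) := by
        linear_combination (τ {y} (B.erase y)) * c3 + (-(τ B {x})) * hu'
      rw [hp, hq, hanti']
      linear_combination (-(τ {y} (B.erase y))) * c2
        + (-(τ {y} (B.erase y) * τ {y} (insert x (B.erase y)))) * ihv
end Aux

section Comm
variable {X : Type*} [DecidableEq X] {R : Type*} [CommRing R]

private lemma tau_comm {r : X → R} {τ : Finset X → Finset X → R} (hτ : Grassmannian r τ) :
    ∀ (n : ℕ) (A B : Finset X), A.card = n →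
      τ A B = (-1:R)^(A.card * B.card + (A ∩ B).card) * τ B A := by
  obtain ⟨hr, hanti, hone, hco, hdisj⟩ := hτ
  intro n
  induction n using Nat.strong_induction_on with
  | _ n ih =>
  match n with
  | 0 =>
    intro A B hA
    obtain rfl := Finset.card_eq_zero.mp hA
    simp [(hone B).1, (hone B).2]
  | 1 =>
    intro A B hA
    obtain ⟨x, rfl⟩ := Finset.card_eq_one.mp hA
    have h := tau_singleton ⟨hr, hanti, hone, hco, hdisj⟩ B.card B x rfl
    rw [h, Finset.card_singleton, one_mul]
    congr 2
    by_cases hxB : x ∈ B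
    · rw [if_pos hxB, Finset.singleton_inter_of_mem hxB, Finset.card_singleton]
    · rw [if_neg hxB, Finset.singleton_inter_of_notMem hxB, Finset.card_empty]
  | (k+2) =>
    intro A B hA
    obtain ⟨x, hxA⟩ := Finset.card_pos.mp (show 0 < A.card by omega)
    have hxA' : x ∉ A.erase x := Finset.notMem_erase x A
    have hAcard' : (A.erase x).card = k + 1 := by
      rw [Finset.card_erase_of_mem hxA, hA]
      omega
    have hinsA : insert x (A.erase x) = A := Finset.insert_erase hxA
    have sdA : symmDiff ({x} : Finset X) (A.erase x) = A := by
      rw [sd_not_mem _ _ hxA', hinsA]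
    have sdA' : symmDiff (A.erase x) ({x} : Finset X) = A := by
      rw [symmDiff_comm]; exact sdA
    have he' : τ (A.erase x) {x} * τ (A.erase x) {x} = 1 :=
      sq_one (hdisj _ _ (Finset.inter_singleton_of_notMem hxA'))
    have hex2 : τ {x} (A.erase x) * τ {x} (A.erase x) = 1 :=
      sq_one (hdisj _ _ (Finset.singleton_inter_of_notMem hxA'))
    have cI := hco {x} (A.erase x) B
    rw [sdA] at cI
    have cII := hco B (A.erase x) {x}
    rw [symmDiff_comm B (A.erase x), sdA'] at cII
    have hex := tau_singleton ⟨hr, hanti, hone, hco, hdisj⟩ (k+1) (A.erase x) x hAcard'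
    rw [if_neg hxA'] at hex
    have hsM := tau_singleton ⟨hr, hanti, hone, hco, hdisj⟩ (symmDiff (A.erase x) B).card
      (symmDiff (A.erase x) B) x rfl
    have hmemM : x ∈ symmDiff (A.erase x) B ↔ x ∈ B := by
      simp [Finset.mem_symmDiff, hxA']
    have ihAB := ih (k+1) (by omega) (A.erase x) B hAcard'
    rw [hAcard'] at ihAB
    have hMc := card_sd (A.erase x) B
    rw [hAcard'] at hMc
    have hp : τ A B = τ {x} (A.erase x) * (τ {x} (symmDiff (A.erase x) B) * τ (A.erase x) B) := by
      linear_combination (τ {x} (A.erase x)) * cI + (-(τ A B)) * hex2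
    have hq : τ B A = τ (A.erase x) {x} * (τ B (A.erase x) * τ (symmDiff (A.erase x) B) {x}) := by
      linear_combination (-(τ (A.erase x) {x})) * cII + (-(τ B A)) * he'
    by_cases hxB : x ∈ B
    · rw [if_pos (hmemM.mpr hxB)] at hsM
      have hinter : (A ∩ B).card = (A.erase x ∩ B).card + 1 := by
        conv_lhs => rw [← hinsA]
        rw [Finset.insert_inter_of_mem hxB,
          Finset.card_insert_of_notMem (fun h => hxA' (Finset.mem_of_mem_inter_left h))]
      have key : τ A B = ((-1:R)^(k+1) * ((-1:R)^((symmDiff (A.erase x) B).card + 1) *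
          (-1:R)^((k+1) * B.card + (A.erase x ∩ B).card))) * τ B A := by
        rw [hp, hex, hsM, ihAB, hq]; ring
      rw [key, ← pow_add, ← pow_add]
      congr 1
      rw [neg_one_pow_eq_pow_mod_two, neg_one_pow_eq_pow_mod_two (A.card * B.card + (A ∩ B).card)]
      congr 1
      rw [hA, hinter]
      have e1 : (k+1) * B.card = k * B.card + B.card := by ring
      have e2 : (k+2) * B.card = k * B.card + 2 * B.card := by ring
      rw [e1, e2]
      generalize k * B.card = K
      omega
    · rw [if_neg (fun h => hxB (hmemM.mp h))] at hsM
      have hinter : (A ∩ B).card = (A.erase x ∩ B).card := by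
        conv_lhs => rw [← hinsA]
        rw [Finset.insert_inter_of_notMem hxB]
      have key : τ A B = ((-1:R)^(k+1) * ((-1:R)^((symmDiff (A.erase x) B).card + 0) *
          (-1:R)^((k+1) * B.card + (A.erase x ∩ B).card))) * τ B A := by
        rw [hp, hex, hsM, ihAB, hq]; ring
      rw [key, ← pow_add, ← pow_add]
      congr 1
      rw [neg_one_pow_eq_pow_mod_two, neg_one_pow_eq_pow_mod_two (A.card * B.card + (A ∩ B).card)]
      congr 1
      rw [hA, hinter]
      have e1 : (k+1) * B.card = k * B.card + B.card := by ring
      have e2 : (k+2) * B.card = k * B.card + 2 * B.card := by ring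
      rw [e1, e2]
      generalize k * B.card = K
      omega
end Comm

private lemma clMul_single {X : Type*} [DecidableEq X] {R : Type*} [CommRing R]
    (τ : Finset X → Finset X → R) (A B : Finset X) :
    clMul τ (Finsupp.single A (1 : R)) (Finsupp.single B (1 : R)) =
      Finsupp.single (symmDiff A B) (τ A B) := by
  unfold clMul
  rw [Finsupp.sum_single_index (by simp), Finsupp.sum_single_index (by simp)]
  simp

/-- In the combinatorial Clifford algebra `Cl(X,R,r)`, for any subsets `A, B ⊆ X` the
basis elements satisfy
`AB = (−1)^{|A|(|A|−1)/2 + |B|(|B|−1)/2 + |A△B|(|A△B|−1)/2} BA`. -/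
theorem clMul_basis_comm {X : Type*} [DecidableEq X] {R : Type*} [CommRing R]
    (r : X → R) (τ : Finset X → Finset X → R) (hτ : Grassmannian r τ)
    (A B : Finset X) :
    clMul τ (Finsupp.single A (1 : R)) (Finsupp.single B (1 : R)) =
      ((-1 : R) ^ (A.card * (A.card - 1) / 2 + B.card * (B.card - 1) / 2 +
          (symmDiff A B).card * ((symmDiff A B).card - 1) / 2)) •
        clMul τ (Finsupp.single B (1 : R)) (Finsupp.single A (1 : R)) := by
  rw [clMul_single, clMul_single, symmDiff_comm B A, Finsupp.smul_single]
  congr 1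
  rw [smul_eq_mul]
  have hcm := card_sd A B
  have hca := Finset.card_le_card (Finset.inter_subset_left : A ∩ B ⊆ A)
  have hcb := Finset.card_le_card (Finset.inter_subset_right : A ∩ B ⊆ B)
  have hpar := parity_lemma (R := R) A.card B.card (A ∩ B).card (symmDiff A B).card
    (by omega) hca hcb
  rw [hpar]
  exact tau_comm hτ A.card A B rfl
end

section
/- In the Clifford algebra Cl(X), the left inner, right inner, outer and scalar products satisfy, for all x, y, z: x ∧ (y ∧ z) = (x ∧ y) ∧ z; x ⌞ (y ⌟ z) = (x ⌞ y) ⌟ z; x ⌞ (y ⌞ z) = (x ∧ y) ⌞ z; and x ∗ (y ⌞ z) = (x ∧ y) ∗ z. -/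
open scoped Classical

variable {X : Type*} [DecidableEq X] {R : Type*} [CommRing R]

/-- The outer product: on basis elements `A ∧ B := [A ∩ B = ∅]·τ(A,B) (A △ B)`,
extended bilinearly to `Cl(X)`. -/
noncomputable def clWedge (τ : Finset X → Finset X → R) (f g : Finset X →₀ R) :
    Finset X →₀ R :=
  f.sum fun A a => g.sum fun B b =>
    if A ∩ B = (∅ : Finset X) then Finsupp.single (symmDiff A B) (a * b * τ A B) else 0

/-- The left inner product: on basis elements `A ⌞ B := [A ⊆ B]·τ(A,B) (A △ B)`,
extended bilinearly to `Cl(X)`. -/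
noncomputable def clLeftInner (τ : Finset X → Finset X → R) (f g : Finset X →₀ R) :
    Finset X →₀ R :=
  f.sum fun A a => g.sum fun B b =>
    if A ⊆ B then Finsupp.single (symmDiff A B) (a * b * τ A B) else 0

/-- The right inner product: on basis elements `A ⌟ B := [A ⊇ B]·τ(A,B) (A △ B)`,
extended bilinearly to `Cl(X)`. -/
noncomputable def clRightInner (τ : Finset X → Finset X → R) (f g : Finset X →₀ R) :
    Finset X →₀ R :=
  f.sum fun A a => g.sum fun B b =>
    if B ⊆ A then Finsupp.single (symmDiff A B) (a * b * τ A B) else 0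

/-- The scalar product: on basis elements `A ∗ B := [A = B]·τ(A,B) ∅`,
extended bilinearly to `Cl(X)`. -/
noncomputable def clScalar (τ : Finset X → Finset X → R) (f g : Finset X →₀ R) :
    Finset X →₀ R :=
  f.sum fun A a => g.sum fun B b =>
    if A = B then Finsupp.single (∅ : Finset X) (a * b * τ A B) else 0


noncomputable def clProd (P : Finset X → Finset X → Prop) (τ : Finset X → Finset X → R)
    (f g : Finset X →₀ R) : Finset X →₀ R :=
  f.sum fun A a => g.sum fun B b =>
    if P A B then Finsupp.single (symmDiff A B) (a * b * τ A B) else 0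

lemma clProd_lhs_expand (P Q : Finset X → Finset X → Prop) (τ : Finset X → Finset X → R)
    (x y z : Finset X →₀ R) :
    clProd P τ x (clProd Q τ y z) =
      x.sum fun A a => y.sum fun B b => z.sum fun C c =>
        if Q B C ∧ P A (symmDiff B C) then
          Finsupp.single (symmDiff A (symmDiff B C)) (a * (b * c * τ B C) * τ A (symmDiff B C))
        else 0 := by
  unfold clProd
  refine Finsupp.sum_congr fun A _ => ?_
  rw [Finsupp.sum_sum_index ?_ ?_]
  · refine Finsupp.sum_congr fun B _ => ?_
    rw [Finsupp.sum_sum_index ?_ ?_]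
    · refine Finsupp.sum_congr fun C _ => ?_
      by_cases hq : Q B C
      · rw [if_pos hq, Finsupp.sum_single_index (by simp)]
        by_cases hp : P A (symmDiff B C)
        · rw [if_pos hp, if_pos ⟨hq, hp⟩]
        · rw [if_neg hp, if_neg (fun h => hp h.2)]
      · rw [if_neg hq, Finsupp.sum_zero_index, if_neg (fun h => hq h.1)]
    · intro i; simp
    · intro i b₁ b₂; split_ifs <;> simp [mul_add, add_mul, Finsupp.single_add]
  · intro i; simp
  · intro i b₁ b₂; split_ifs <;> simp [mul_add, add_mul, Finsupp.single_add]

lemma clProd_rhs_expand (P' Q' : Finset X → Finset X → Prop) (τ : Finset X → Finset X → R)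
    (x y z : Finset X →₀ R) :
    clProd Q' τ (clProd P' τ x y) z =
      x.sum fun A a => y.sum fun B b => z.sum fun C c =>
        if P' A B ∧ Q' (symmDiff A B) C then
          Finsupp.single (symmDiff (symmDiff A B) C) ((a * b * τ A B) * c * τ (symmDiff A B) C)
        else 0 := by
  unfold clProd
  rw [Finsupp.sum_sum_index ?_ ?_]
  · refine Finsupp.sum_congr fun A _ => ?_
    rw [Finsupp.sum_sum_index ?_ ?_]
    · refine Finsupp.sum_congr fun B _ => ?_
      by_cases hp : P' A B
      · rw [if_pos hp, Finsupp.sum_single_index (by simp)]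
        refine Finsupp.sum_congr fun C _ => ?_
        by_cases hq : Q' (symmDiff A B) C
        · rw [if_pos hq, if_pos ⟨hp, hq⟩]
        · rw [if_neg hq, if_neg (fun h => hq h.2)]
      · rw [if_neg hp, Finsupp.sum_zero_index]
        simp [hp]
    · intro i; simp
    · intro i b₁ b₂
      rw [← Finsupp.sum_add]
      refine Finsupp.sum_congr fun C _ => ?_
      split_ifs <;> simp [mul_add, add_mul, Finsupp.single_add]
  · intro i; simp
  · intro i b₁ b₂
    rw [← Finsupp.sum_add]
    refine Finsupp.sum_congr fun C _ => ?_
    split_ifs <;> simp [mul_add, add_mul, Finsupp.single_add]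

lemma clProd_assoc (P Q P' Q' : Finset X → Finset X → Prop) (τ : Finset X → Finset X → R)
    (hτ : ∀ A B C : Finset X, τ A B * τ (symmDiff A B) C = τ A (symmDiff B C) * τ B C)
    (h : ∀ A B C : Finset X, (Q B C ∧ P A (symmDiff B C)) ↔ (P' A B ∧ Q' (symmDiff A B) C))
    (x y z : Finset X →₀ R) :
    clProd P τ x (clProd Q τ y z) = clProd Q' τ (clProd P' τ x y) z := by
  rw [clProd_lhs_expand, clProd_rhs_expand]
  refine Finsupp.sum_congr fun A _ => Finsupp.sum_congr fun B _ =>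
    Finsupp.sum_congr fun C _ => ?_
  by_cases hl : Q B C ∧ P A (symmDiff B C)
  · rw [if_pos hl, if_pos ((h A B C).mp hl), symmDiff_assoc]
    congr 1
    linear_combination (-(x A * y B * z C)) * hτ A B C
  · rw [if_neg hl, if_neg (fun hr => hl ((h A B C).mpr hr))]

lemma clWedge_eq_clProd (τ : Finset X → Finset X → R) :
    clWedge τ = clProd (fun A B => A ∩ B = (∅ : Finset X)) τ := by
  funext f g
  unfold clWedge clProd
  refine Finsupp.sum_congr fun A _ => Finsupp.sum_congr fun B _ => ?_
  by_cases h : A ∩ B = (∅ : Finset X)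
  · rw [if_pos h, if_pos h]
  · rw [if_neg h, if_neg h]

lemma clLeftInner_eq_clProd (τ : Finset X → Finset X → R) :
    clLeftInner τ = clProd (fun A B => A ⊆ B) τ := by
  funext f g
  unfold clLeftInner clProd
  refine Finsupp.sum_congr fun A _ => Finsupp.sum_congr fun B _ => ?_
  by_cases h : A ⊆ B
  · rw [if_pos h, if_pos h]
  · rw [if_neg h, if_neg h]

lemma clRightInner_eq_clProd (τ : Finset X → Finset X → R) :
    clRightInner τ = clProd (fun A B => B ⊆ A) τ := by
  funext f g
  unfold clRightInner clProd
  refine Finsupp.sum_congr fun A _ => Finsupp.sum_congr fun B _ => ?_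
  by_cases h : B ⊆ A
  · rw [if_pos h, if_pos h]
  · rw [if_neg h, if_neg h]

lemma clScalar_eq_clProd (τ : Finset X → Finset X → R) :
    clScalar τ = clProd (fun A B => A = B) τ := by
  funext f g
  unfold clScalar clProd
  refine Finsupp.sum_congr fun A _ => Finsupp.sum_congr fun B _ => ?_
  by_cases h : A = B
  · rw [if_pos h, if_pos h]
    subst h
    simp [symmDiff_self]
  · rw [if_neg h, if_neg h]

lemma cl_cond1 (A B C : Finset X) :
    (B ∩ C = ∅ ∧ A ∩ symmDiff B C = ∅) ↔ (A ∩ B = ∅ ∧ symmDiff A B ∩ C = ∅) := by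
  simp only [Finset.eq_empty_iff_forall_notMem, Finset.mem_inter, Finset.mem_symmDiff]
  constructor
  · rintro ⟨h1, h2⟩
    constructor
    · rintro a ⟨ha, hb⟩
      exact h2 a ⟨ha, Or.inl ⟨hb, fun hc => h1 a ⟨hb, hc⟩⟩⟩
    · rintro a ⟨hab, hc⟩
      rcases hab with ⟨ha, hb⟩ | ⟨hb, ha⟩
      · exact h2 a ⟨ha, Or.inr ⟨hc, hb⟩⟩
      · exact h1 a ⟨hb, hc⟩
  · rintro ⟨h1, h2⟩
    constructor
    · rintro a ⟨hb, hc⟩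
      exact h2 a ⟨Or.inr ⟨hb, fun ha => h1 a ⟨ha, hb⟩⟩, hc⟩
    · rintro a ⟨ha, hbc⟩
      rcases hbc with ⟨hb, hc⟩ | ⟨hc, hb⟩
      · exact h1 a ⟨ha, hb⟩
      · exact h2 a ⟨Or.inl ⟨ha, hb⟩, hc⟩

lemma cl_cond2 (A B C : Finset X) :
    (C ⊆ B ∧ A ⊆ symmDiff B C) ↔ (A ⊆ B ∧ C ⊆ symmDiff A B) := by
  simp only [Finset.subset_iff, Finset.mem_symmDiff]
  constructor
  · rintro ⟨h1, h2⟩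
    constructor
    · intro a ha
      rcases h2 ha with ⟨hb, _⟩ | ⟨hc, hb⟩
      · exact hb
      · exact absurd (h1 hc) hb
    · intro a hc
      refine Or.inr ⟨h1 hc, fun ha => ?_⟩
      rcases h2 ha with ⟨_, hnc⟩ | ⟨_, hnb⟩
      · exact hnc hc
      · exact hnb (h1 hc)
  · rintro ⟨h1, h2⟩
    constructor
    · intro a hc
      rcases h2 hc with ⟨ha, _⟩ | ⟨hb, _⟩
      · exact h1 ha
      · exact hb
    · intro a ha
      refine Or.inl ⟨h1 ha, fun hc => ?_⟩
      rcases h2 hc with ⟨_, hnb⟩ | ⟨_, hna⟩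
      · exact hnb (h1 ha)
      · exact hna ha

lemma cl_cond3 (A B C : Finset X) :
    (B ⊆ C ∧ A ⊆ symmDiff B C) ↔ (A ∩ B = ∅ ∧ symmDiff A B ⊆ C) := by
  simp only [Finset.eq_empty_iff_forall_notMem, Finset.subset_iff, Finset.mem_inter,
    Finset.mem_symmDiff]
  constructor
  · rintro ⟨h1, h2⟩
    constructor
    · rintro a ⟨ha, hb⟩
      rcases h2 ha with ⟨hb', _⟩ | ⟨_, hnb⟩
      · exact absurd (h1 hb') (by rcases h2 ha with ⟨_, hnc⟩ | ⟨_, hnb⟩ <;>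
          [exact hnc; exact absurd hb hnb])
      · exact hnb hb
    · rintro a (⟨ha, hnb⟩ | ⟨hb, hna⟩)
      · rcases h2 ha with ⟨hb', _⟩ | ⟨hc, _⟩
        · exact absurd hb' hnb
        · exact hc
      · exact h1 hb
  · rintro ⟨h1, h2⟩
    constructor
    · intro a hb
      exact h2 (Or.inr ⟨hb, fun ha => h1 a ⟨ha, hb⟩⟩)
    · intro a ha
      have hnb : a ∉ B := fun hb => h1 a ⟨ha, hb⟩
      exact Or.inr ⟨h2 (Or.inl ⟨ha, hnb⟩), hnb⟩

lemma cl_cond4 (A B C : Finset X) :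
    (B ⊆ C ∧ A = symmDiff B C) ↔ (A ∩ B = ∅ ∧ symmDiff A B = C) := by
  constructor
  · rintro ⟨h1, rfl⟩
    constructor
    · ext a
      simp only [Finset.mem_inter, Finset.mem_symmDiff, Finset.notMem_empty, iff_false]
      rintro ⟨⟨hb, hnc⟩ | ⟨hc, hnb⟩, hb'⟩
      · exact hnc (h1 hb)
      · exact hnb hb'
    · rw [symmDiff_comm (symmDiff B C) B, symmDiff_symmDiff_cancel_left]
  · rintro ⟨h1, rfl⟩
    have hd : Disjoint A B := Finset.disjoint_iff_inter_eq_empty.mpr h1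
    constructor
    · intro a hb
      simp only [Finset.mem_symmDiff]
      exact Or.inr ⟨hb, fun ha => (Finset.disjoint_left.mp hd ha) hb⟩
    · rw [symmDiff_comm A B, symmDiff_symmDiff_cancel_left]

/-- In the Clifford algebra `Cl(X)`, the outer, left inner, right inner and scalar products
satisfy, for all `x, y, z`:
`x ∧ (y ∧ z) = (x ∧ y) ∧ z`, `x ⌞ (y ⌟ z) = (x ⌞ y) ⌟ z`,
`x ⌞ (y ⌞ z) = (x ∧ y) ⌞ z`, and `x ∗ (y ⌞ z) = (x ∧ y) ∗ z`. -/
theorem cl_product_identities (r : X → R) (τ : Finset X → Finset X → R)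
    (hτ : Grassmannian r τ) (x y z : Finset X →₀ R) :
    clWedge τ x (clWedge τ y z) = clWedge τ (clWedge τ x y) z ∧
    clLeftInner τ x (clRightInner τ y z) = clRightInner τ (clLeftInner τ x y) z ∧
    clLeftInner τ x (clLeftInner τ y z) = clLeftInner τ (clWedge τ x y) z ∧
    clScalar τ x (clLeftInner τ y z) = clScalar τ (clWedge τ x y) z := by
  obtain ⟨-, -, -, h4, -⟩ := hτ
  rw [clWedge_eq_clProd, clLeftInner_eq_clProd, clRightInner_eq_clProd, clScalar_eq_clProd]
  exact ⟨clProd_assoc _ _ _ _ τ h4 cl_cond1 x y z,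
    clProd_assoc _ _ _ _ τ h4 cl_cond2 x y z,
    clProd_assoc _ _ _ _ τ h4 cl_cond3 x y z,
    clProd_assoc _ _ _ _ τ h4 cl_cond4 x y z⟩
end

section
/- For 1-vectors u_1,…,u_k and v_1,…,v_k in a Clifford algebra, the scalar product of the blades satisfies (u_1 ∧ u_2 ∧ ⋯ ∧ u_k) ∗ (v_k ∧ v_{k−1} ∧ ⋯ ∧ v_1) = det[u_i ∗ v_j]_{1≤i,j≤k}. -/
/-!
Write `B = QuadraticMap.associated Q`, so that `B u v = ½ polar Q u v = u ∗ v`. The outer product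
is `v ∧ x = v x - (B v)⌋x`, and `v x` has the same scalar part as `(B v)⌋x`, since in the exterior
algebra it becomes `v ∧ x' + (B v)⌋x'`. With the Leibniz rule for `⌋` this gives
`⟨(v ∧ x) y⟩₀ = ⟨x̂ ((B v)⌋y)⟩₀`. Contracting the reversed blade `v_k ∧ ⋯ ∧ v_1` by `B u_1`
removes one `v_j` at a time with alternating signs, so induction on `k` reproduces the Laplace
expansion of the determinant along its first row.
-/

variable {K V : Type*} [Field K] [AddCommGroup V] [Module K V]

/-- The outer product of a vector with an arbitrary multivector:
`v ∧ x := ½(v x + x* v)`. -/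
noncomputable def wedgeVec (Q : QuadraticForm K V) (v : V) (x : CliffordAlgebra Q) :
    CliffordAlgebra Q :=
  ((2 : K)⁻¹) • (CliffordAlgebra.ι Q v * x + CliffordAlgebra.involute x * CliffordAlgebra.ι Q v)

/-- The blade `a_1 ∧ a_2 ∧ ⋯ ∧ a_m` built from a list of vectors. -/
noncomputable def wedgeList (Q : QuadraticForm K V) (l : List V) : CliffordAlgebra Q :=
  l.foldr (fun v x => wedgeVec Q v x) 1

/-- The scalar (grade-0) part `⟨x⟩₀` of a multivector, obtained via the canonical
linear equivalence with the exterior algebra. -/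
noncomputable def scalarPart (Q : QuadraticForm K V) [Invertible (2 : K)]
    (x : CliffordAlgebra Q) : K :=
  ExteriorAlgebra.algebraMapInv (CliffordAlgebra.equivExterior Q x)

open CliffordAlgebra

section CommRing

variable {R M : Type*} [CommRing R] [AddCommGroup M] [Module R M] {Q : QuadraticForm R M}

theorem QuadraticMap.two_mul_associated_apply [Invertible (2 : R)] (x y : M) :
    2 * QuadraticMap.associated Q x y = QuadraticMap.polar Q x y := by
  simpa [two_nsmul, two_mul] using
    LinearMap.congr_fun₂ (QuadraticMap.two_nsmul_associated R Q) x y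

theorem CliffordAlgebra.contractLeft_mul (d : Module.Dual R M) (x y : CliffordAlgebra Q) :
    contractLeft d (x * y) = contractLeft d x * y + involute x * contractLeft d y := by
  induction x using CliffordAlgebra.left_induction with
  | algebraMap r =>
    rw [contractLeft_algebraMap_mul, contractLeft_algebraMap, zero_mul, zero_add, AlgHom.commutes]
  | add x₁ x₂ h₁ h₂ =>
    simp only [add_mul, map_add, h₁, h₂]
    abel
  | ι_mul x m h =>
    simp only [mul_assoc, contractLeft_ι_mul, h, map_mul, involute_ι, mul_add, sub_mul,
      smul_mul_assoc, neg_mul]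
    abel

theorem CliffordAlgebra.contractLeft_associated [Invertible (2 : R)] (v : M)
    (x : CliffordAlgebra Q) :
    contractLeft (QuadraticMap.associated Q v) x =
      ⅟(2 : R) • (ι Q v * x - involute x * ι Q v) := by
  induction x using CliffordAlgebra.left_induction with
  | algebraMap r =>
    rw [contractLeft_algebraMap, AlgHom.commutes, Algebra.commutes, sub_self, smul_zero]
  | add x₁ x₂ h₁ h₂ =>
    simp only [map_add, h₁, h₂, mul_add, add_mul]
    module
  | ι_mul x m h =>
    rw [contractLeft_ι_mul, h, map_mul, involute_ι, ← mul_assoc, ι_mul_ι_comm,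
      ← QuadraticMap.two_mul_associated_apply, sub_mul, ← Algebra.smul_def]
    simp only [mul_sub, mul_smul_comm, neg_mul, mul_assoc]
    match_scalars <;> simp

theorem ExteriorAlgebra.algebraMapInv_ι (m : M) :
    ExteriorAlgebra.algebraMapInv (ExteriorAlgebra.ι R m) = 0 := by
  simp [ExteriorAlgebra.algebraMapInv]

end CommRing

theorem List.reverse_ofFn_succ {α : Type*} {n : ℕ} (f : Fin (n + 1) → α) :
    (List.ofFn f).reverse = f (Fin.last n) :: (List.ofFn fun i => f i.castSucc).reverse := by
  rw [List.ofFn_succ_last]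
  simp

section Wedge

variable (Q : QuadraticForm K V)

theorem wedgeList_nil : wedgeList Q [] = 1 := rfl

theorem wedgeList_cons (a : V) (l : List V) :
    wedgeList Q (a :: l) = wedgeVec Q a (wedgeList Q l) := rfl

noncomputable def wedgeVecₗ (v : V) : CliffordAlgebra Q →ₗ[K] CliffordAlgebra Q :=
  (2 : K)⁻¹ • (LinearMap.mulLeft K (ι Q v) + LinearMap.mulRight K (ι Q v) ∘ₗ involute.toLinearMap)

theorem wedgeVecₗ_apply (v : V) (x : CliffordAlgebra Q) : wedgeVecₗ Q v x = wedgeVec Q v x := rfl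

@[simp]
theorem wedgeVec_zero (v : V) : wedgeVec Q v 0 = 0 := map_zero (wedgeVecₗ Q v)

theorem involute_wedgeVec (v : V) (x : CliffordAlgebra Q) :
    involute (wedgeVec Q v x) = -wedgeVec Q v (involute x) := by
  simp only [wedgeVec, map_smul, map_add, map_mul, involute_ι, involute_involute, neg_mul,
    mul_neg]
  module

theorem involute_wedgeList (l : List V) :
    involute (wedgeList Q l) = (-1 : K) ^ l.length • wedgeList Q l := by
  induction l with
  | nil => simp [wedgeList_nil]
  | cons a l ih =>
    rw [wedgeList_cons, involute_wedgeVec, ih, ← wedgeVecₗ_apply, map_smul, wedgeVecₗ_apply,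
      List.length_cons, pow_succ]
    module

variable [Invertible (2 : K)]

theorem wedgeVec_eq_ι_mul_sub_contractLeft (v : V) (x : CliffordAlgebra Q) :
    wedgeVec Q v x = ι Q v * x - contractLeft (QuadraticMap.associated Q v) x := by
  rw [wedgeVec, contractLeft_associated, invOf_eq_inv]
  match_scalars <;> field_simp; norm_num

theorem contractLeft_wedgeVec (d : Module.Dual K V) (v : V) (x : CliffordAlgebra Q) :
    contractLeft d (wedgeVec Q v x) = d v • x - wedgeVec Q v (contractLeft d x) := by
  rw [wedgeVec_eq_ι_mul_sub_contractLeft, map_sub, contractLeft_ι_mul, contractLeft_comm,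
    wedgeVec_eq_ι_mul_sub_contractLeft]
  abel

end Wedge

section Blade

variable (Q : QuadraticForm K V) [Invertible (2 : K)]

-- `v j` sits at position `n - j` of the reversed list; `n + j` has the same parity.
theorem contractLeft_wedgeList_reverse_ofFn (d : Module.Dual K V) {n : ℕ}
    (v : Fin (n + 1) → V) :
    contractLeft d (wedgeList Q (List.ofFn v).reverse) =
      ∑ j : Fin (n + 1), ((-1 : K) ^ (n + j : ℕ) * d (v j)) •
        wedgeList Q (List.ofFn (v ∘ j.succAbove)).reverse := by
  induction n with
  | zero => simp [wedgeList_cons, wedgeList_nil, contractLeft_wedgeVec]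
  | succ n ih =>
    have hcast (j : Fin (n + 1)) : wedgeList Q (List.ofFn (v ∘ j.castSucc.succAbove)).reverse =
        wedgeVec Q (v (Fin.last _))
          (wedgeList Q (List.ofFn ((fun i => v i.castSucc) ∘ j.succAbove)).reverse) := by
      rw [List.reverse_ofFn_succ, wedgeList_cons]
      simp [Function.comp_def, Fin.castSucc_succAbove_castSucc]
    rw [List.reverse_ofFn_succ, wedgeList_cons, contractLeft_wedgeVec, ih, ← wedgeVecₗ_apply,
      map_sum]
    conv_rhs => rw [Fin.sum_univ_castSucc]
    simp only [hcast, map_smul, wedgeVecₗ_apply, Fin.succAbove_last]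
    rw [sub_eq_neg_add, ← Finset.sum_neg_distrib]
    congr 1
    · refine Finset.sum_congr rfl fun j _ => ?_
      rw [← neg_smul, Fin.val_castSucc, add_right_comm, pow_succ, mul_neg_one, neg_mul]
    · rw [Fin.val_last, ← two_mul, pow_mul, neg_one_sq, one_pow, one_mul]
      rfl

end Blade

section ScalarPart

variable (Q : QuadraticForm K V) [Invertible (2 : K)]

noncomputable def scalarPartₗ : CliffordAlgebra Q →ₗ[K] K :=
  ExteriorAlgebra.algebraMapInv.toLinearMap ∘ₗ (equivExterior Q).toLinearMap

theorem scalarPartₗ_apply (x : CliffordAlgebra Q) : scalarPartₗ Q x = scalarPart Q x := rfl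

theorem scalarPart_one : scalarPart Q 1 = 1 := by
  simp [scalarPart]

theorem scalarPart_ι_mul (v : V) (x : CliffordAlgebra Q) :
    scalarPart Q (ι Q v * x) = scalarPart Q (contractLeft (QuadraticMap.associated Q v) x) := by
  simp only [scalarPart, equivExterior, changeFormEquiv_apply, changeForm_ι_mul, map_neg,
    LinearMap.neg_apply, sub_neg_eq_add, map_add, map_mul, changeForm_contractLeft]
  rw [ExteriorAlgebra.algebraMapInv_ι v, zero_mul, zero_add]

theorem scalarPart_wedgeVec_mul (v : V) (x y : CliffordAlgebra Q) :
    scalarPart Q (wedgeVec Q v x * y) =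
      scalarPart Q (involute x * contractLeft (QuadraticMap.associated Q v) y) := by
  rw [wedgeVec_eq_ι_mul_sub_contractLeft, sub_mul, mul_assoc, ← scalarPartₗ_apply, map_sub,
    scalarPartₗ_apply, scalarPart_ι_mul, contractLeft_mul, ← scalarPartₗ_apply, map_add,
    add_sub_cancel_left]
  exact scalarPartₗ_apply Q _

end ScalarPart

theorem scalarPart_wedgeList_mul_wedgeList_reverse (Q : QuadraticForm K V) [Invertible (2 : K)]
    {k : ℕ} (u v : Fin k → V) :
    scalarPart Q (wedgeList Q (List.ofFn u) * wedgeList Q (List.ofFn v).reverse) =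
      (Matrix.of fun i j => QuadraticMap.associated Q (u i) (v j)).det := by
  induction k with
  | zero => simp [wedgeList_nil, scalarPart_one]
  | succ n ih =>
    rw [List.ofFn_succ, wedgeList_cons, scalarPart_wedgeVec_mul, involute_wedgeList,
      contractLeft_wedgeList_reverse_ofFn, Matrix.det_succ_row_zero, ← scalarPartₗ_apply]
    simp only [smul_mul_assoc, Finset.mul_sum, mul_smul_comm, map_smul, map_sum,
      scalarPartₗ_apply]
    refine Fintype.sum_congr _ _ fun j => ?_
    have hsign : (-1 : K) ^ (n + j : ℕ) * (-1) ^ n = (-1) ^ (j : ℕ) := by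
      rw [← pow_add, add_right_comm, ← two_mul, pow_add, pow_mul, neg_one_sq, one_pow, one_mul]
    have hminor : (Matrix.of fun i j => QuadraticMap.associated Q (u i) (v j)).submatrix
        Fin.succ j.succAbove =
          Matrix.of fun a b => QuadraticMap.associated Q (u a.succ) ((v ∘ j.succAbove) b) := rfl
    rw [ih, List.length_ofFn, smul_eq_mul, smul_eq_mul, Matrix.of_apply, hminor, ← hsign]
    ring

/-- For 1-vectors `u_1,…,u_k` and `v_1,…,v_k` in a Clifford algebra, the scalar product
of the blades satisfies
`(u_1 ∧ ⋯ ∧ u_k) ∗ (v_k ∧ ⋯ ∧ v_1) = det [u_i ∗ v_j]`,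
where `x ∗ y = ⟨xy⟩₀` and `u ∗ v = β_q(u,v)` for vectors. -/
theorem blade_scalar_product_det (Q : QuadraticForm K V) [Invertible (2 : K)]
    {k : ℕ} (u v : Fin k → V) :
    scalarPart Q (wedgeList Q (List.ofFn u) * wedgeList Q (List.ofFn v).reverse) =
      Matrix.det (Matrix.of fun i j : Fin k =>
        (2 : K)⁻¹ * QuadraticMap.polar Q (u i) (v j)) := by
  rw [scalarPart_wedgeList_mul_wedgeList_reverse]
  congr 1
  ext i j
  rw [Matrix.of_apply, Matrix.of_apply, ← QuadraticMap.two_mul_associated_apply, ← invOf_eq_inv,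
    invOf_mul_cancel_left]
end

section
/- Vectors x_1,…,x_m in a Clifford algebra over a commutative ring R are linearly independent (no nontrivial R-linear combination vanishes) if and only if the single element x_1 ∧ x_2 ∧ ⋯ ∧ x_m is linearly independent (i.e. r·(x_1 ∧ ⋯ ∧ x_m) = 0 for r ∈ R implies r = 0). -/
/-!
If `∑ gᵢ • xᵢ = 0`, then `g_j • (x_1 ∧ ⋯ ∧ x_m)` is the wedge with `x_j` replaced by
`g_j • x_j = -∑_{i ≠ j} gᵢ • xᵢ`, which vanishes since each term repeats a factor.

Conversely, evaluating `x_1 ∧ ⋯ ∧ x_m` on the alternating forms `det (b*_{γ_1}, …, b*_{γ_m})`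
built from a basis `b` shows that `r` annihilates every maximal minor of the coordinate matrix
of the `xᵢ`. McCoy's theorem then yields a nontrivial relation among its rows: take a largest
minor whose product with `r` is nonzero, border it by a new row and an arbitrary column, and
expand along that column; since `r` kills all bordered minors, `r` times the cofactors of the
new column is such a relation.
-/

open Matrix

namespace AlternatingMap

variable {R M N ι : Type*} [Semiring R] [AddCommGroup M] [Module R M] [AddCommGroup N] [Module R N]

theorem smul_apply_eq_zero_of_sum_smul_eq_zero [Fintype ι] [DecidableEq ι]
    (f : M [⋀^ι]→ₗ[R] N) {v : ι → M} {g : ι → R} (hg : ∑ i, g i • v i = 0) (j : ι) :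
    g j • f v = 0 := by
  have hj : g j • v j = -∑ i ∈ Finset.univ.erase j, g i • v i :=
    eq_neg_of_add_eq_zero_right <| by rwa [Finset.sum_erase_add _ _ (Finset.mem_univ j)]
  have hupd := f.map_update_smul v j (g j) (v j)
  rw [Function.update_eq_self] at hupd
  rw [← hupd, hj, f.map_update_neg, f.map_update_sum, Finset.sum_eq_zero fun i hi => ?_, neg_zero]
  rw [f.map_update_smul, f.map_update_self v (Finset.ne_of_mem_erase hi).symm, smul_zero]

end AlternatingMap

namespace ExteriorAlgebra

variable {R M N : Type*} [CommRing R] [AddCommGroup M] [Module R M] [AddCommGroup N] [Module R N]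

theorem smul_apply_eq_zero_of_smul_ιMulti_eq_zero {n : ℕ} (f : M [⋀^Fin n]→ₗ[R] N)
    {v : Fin n → M} {r : R} (h : r • ιMulti R n v = 0) : r • f v = 0 := by
  classical
  simpa [liftAlternating_apply_ιMulti] using
    congrArg (liftAlternating (Pi.single (M := fun i => M [⋀^Fin i]→ₗ[R] N) n f)) h

end ExteriorAlgebra

namespace Matrix

variable {R ι : Type*} [CommRing R]

theorem det_dvd_det_submatrix {n : Type*} [Fintype n] [DecidableEq n] (B : Matrix n n R)
    (ρ : n → n) : B.det ∣ (B.submatrix ρ id).det := by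
  by_cases hρ : Function.Injective ρ
  · rw [show ρ = Equiv.ofBijective ρ hρ.bijective_of_finite from rfl, det_permute]
    exact dvd_mul_left _ _
  · obtain ⟨a, b, hab, hne⟩ : ∃ a b, ρ a = ρ b ∧ a ≠ b := by
      simpa [Function.Injective] using hρ
    rw [det_zero_of_row_eq (M := B.submatrix ρ id) hne (by ext; simp [hab])]
    exact dvd_zero _

theorem injective_of_det_submatrix_ne_zero {k n : Type*} [Fintype k] [DecidableEq k]
    {A : Matrix n ι R} {ρ : k → n} {γ : k → ι} (h : (A.submatrix ρ γ).det ≠ 0) :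
    Function.Injective ρ := by
  intro a b hab
  by_contra hne
  exact h (det_zero_of_row_eq hne (by ext; simp [hab]))

theorem vecMul_extend_zero {α k n : Type*} [NonUnitalNonAssocSemiring α] [Fintype k] [Fintype n]
    {ρ : k → n} (hρ : Function.Injective ρ) (c : k → α) (A : Matrix n ι α) :
    Function.extend ρ c 0 ᵥ* A = c ᵥ* A.submatrix ρ id := by
  ext j
  simp only [vecMul, dotProduct, submatrix_apply, id]
  refine (Fintype.sum_of_injective ρ hρ _ _ (fun q hq => ?_) fun i => ?_).symm
  · simp [Function.extend_apply' _ _ _ (by simpa using hq)]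
  · simp [hρ.extend_apply]

theorem vecMul_cofactor_eq_det_submatrix_snoc {t : ℕ} (B : Matrix (Fin (t + 1)) ι R)
    (γ : Fin t → ι) (j : ι) :
    ((fun i : Fin (t + 1) => (-1) ^ (i + t : ℕ) * (B.submatrix i.succAbove γ).det) ᵥ* B) j =
      (B.submatrix id (Fin.snoc γ j)).det := by
  rw [det_succ_column _ (Fin.last t), vecMul, dotProduct]
  refine Finset.sum_congr rfl fun i _ => ?_
  simp [Fin.succAbove_last]
  ring

theorem exists_maximal_minor_mul_det_ne_zero {m : ℕ} (A : Matrix (Fin m) ι R) {r : R}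
    (hr : r ≠ 0) (h : ∀ γ : Fin m → ι, r * (A.submatrix id γ).det = 0) :
    ∃ t < m, ∃ (ρ : Fin t → Fin m) (γ : Fin t → ι), r * (A.submatrix ρ γ).det ≠ 0 ∧
      ∀ (ρ' : Fin (t + 1) → Fin m) (γ' : Fin (t + 1) → ι), r * (A.submatrix ρ' γ').det = 0 := by
  by_contra! hext
  have hall : ∀ t ≤ m, ∃ (ρ : Fin t → Fin m) (γ : Fin t → ι), r * (A.submatrix ρ γ).det ≠ 0 := by
    intro t ht
    induction t with
    | zero => exact ⟨Fin.elim0, Fin.elim0, by simpa using hr⟩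
    | succ t ih =>
      obtain ⟨ρ, γ, hne⟩ := ih (by omega)
      exact hext t (by omega) ρ γ hne
  obtain ⟨ρ, γ, hne⟩ := hall m le_rfl
  obtain ⟨u, hu⟩ := det_dvd_det_submatrix (A.submatrix id γ) ρ
  have hsub : A.submatrix ρ γ = (A.submatrix id γ).submatrix ρ id := rfl
  exact hne (by rw [hsub, hu, ← mul_assoc, h, zero_mul])

theorem exists_vecMul_eq_zero_of_mul_det_eq_zero {m : ℕ} (A : Matrix (Fin m) ι R) {r : R}
    (hr : r ≠ 0) (h : ∀ γ : Fin m → ι, r * (A.submatrix id γ).det = 0) :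
    ∃ g ≠ 0, g ᵥ* A = 0 := by
  obtain ⟨t, htm, ρ, γ, hne, hmax⟩ := exists_maximal_minor_mul_det_ne_zero A hr h
  have hρ : Function.Injective ρ := injective_of_det_submatrix_ne_zero (right_ne_zero_of_mul hne)
  obtain ⟨p, hp⟩ : ∃ p, p ∉ Set.range ρ := by
    by_contra! hsurj
    have := Fintype.card_le_of_surjective ρ hsurj
    simp only [Fintype.card_fin] at this
    omega
  set ρ' : Fin (t + 1) → Fin m := Fin.snoc ρ p
  have hρ' : Function.Injective ρ' := Fin.snoc_injective_of_injective hρ hp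
  set c : Fin (t + 1) → R := r • fun i : Fin (t + 1) =>
    (-1) ^ (i + t : ℕ) * ((A.submatrix ρ' id).submatrix i.succAbove γ).det
  refine ⟨Function.extend ρ' c 0, fun hg => hne ?_, ?_⟩
  · -- the last entry of `c` is `(-1) ^ (2 * t) * r` times the chosen minor
    have hlast := congrFun hg (ρ' (Fin.last t))
    rw [hρ'.extend_apply] at hlast
    simpa [c, ρ', Fin.succAbove_last, ← two_mul, pow_mul] using hlast
  · rw [vecMul_extend_zero hρ', show c = r • _ from rfl, smul_vecMul]
    ext j
    rw [Pi.smul_apply, vecMul_cofactor_eq_det_submatrix_snoc, submatrix_submatrix]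
    exact hmax _ _

end Matrix

theorem Module.Basis.repr_sum_smul_eq_vecMul {R M ι κ : Type*} [CommRing R] [AddCommGroup M]
    [Module R M] [Fintype κ] (b : Module.Basis ι R M) (g : κ → R) (x : κ → M) :
    ⇑(b.repr (∑ i, g i • x i)) = g ᵥ* Matrix.of fun i j => b.repr (x i) j := by
  ext j
  simp [vecMul, dotProduct, Finsupp.finsetSum_apply]

theorem linearIndependent_iff_wedge_general
    {R M : Type*} [CommRing R] [AddCommGroup M] [Module R M]
    [Module.Free R M]
    {m : ℕ} (x : Fin m → M) :
    LinearIndependent R x ↔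
      ∀ r : R, r • (List.ofFn fun i => ExteriorAlgebra.ι R (x i)).prod = 0 → r = 0 := by
  rw [← ExteriorAlgebra.ιMulti_apply, Fintype.linearIndependent_iff]
  constructor
  · intro hli r hr
    by_contra hr0
    let b := Module.Free.chooseBasis R M
    let A : Matrix (Fin m) _ R := Matrix.of fun i j => b.repr (x i) j
    have hminors (γ : Fin m → Module.Free.ChooseBasisIndex R M) :
        r * (A.submatrix id γ).det = 0 :=
      ExteriorAlgebra.smul_apply_eq_zero_of_smul_ιMulti_eq_zero
        (detRowAlternating.compLinearMap (LinearMap.pi fun k => b.coord (γ k))) hr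
    obtain ⟨g, hg0, hg⟩ := exists_vecMul_eq_zero_of_mul_det_eq_zero A hr0 hminors
    have hsum : ∑ i, g i • x i = 0 :=
      b.repr.injective <| DFunLike.coe_injective <| by
        rw [b.repr_sum_smul_eq_vecMul, hg, map_zero, Finsupp.coe_zero]
    exact hg0 (funext (hli g hsum))
  · intro h g hg j
    exact h _ (AlternatingMap.smul_apply_eq_zero_of_sum_smul_eq_zero _ hg j)

/-- Vectors `x_1,…,x_m` in a Clifford algebra over a commutative ring `R` (whose exterior
structure is the exterior algebra of a finite free `R`-module) are linearly independent
(no nontrivial `R`-linear combination vanishes) if and only if the `m`-vector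
`x_1 ∧ x_2 ∧ ⋯ ∧ x_m` is linearly independent, i.e. `r • (x_1 ∧ ⋯ ∧ x_m) = 0` implies
`r = 0`. -/
theorem linearIndependent_iff_wedge
    {R M : Type*} [CommRing R] [AddCommGroup M] [Module R M]
    [Module.Free R M] [Module.Finite R M]
    {m : ℕ} (x : Fin m → M) :
    LinearIndependent R x ↔
      ∀ r : R, r • (List.ofFn fun i => ExteriorAlgebra.ι R (x i)).prod = 0 → r = 0 :=
  linearIndependent_iff_wedge_general x
end

section
/- Hestenes' Theorem: if G is a nondegenerate geometric algebra and F : G → G is an outermorphism with adjoint F* (defined by F*(x) ∗ y = x ∗ F(y) for all x, y), then F* is also an outermorphism and x ⌞ F(y) = F(F*(x) ⌞ y) and F(x) ⌟ y = F(x ⌟ F*(y)) for all x, y ∈ G. -/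
open scoped Classical

variable {X : Type*} [DecidableEq X] {R : Type*} [CommRing R]

/-- The grade-`k` part `Cl^k(X)`: elements supported on subsets of cardinality `k`. -/
noncomputable def clGrade (R : Type*) [CommRing R] {X : Type*} [DecidableEq X] (k : ℕ) :
    Submodule R (Finset X →₀ R) :=
  Finsupp.supported R R {A : Finset X | A.card = k}

/-- An outermorphism of `Cl(X)`: a linear map fixing the unit, preserving grades, and
multiplicative for the outer product. -/
def IsOutermorphism (τ : Finset X → Finset X → R)
    (F : (Finset X →₀ R) →ₗ[R] (Finset X →₀ R)) : Prop :=
  F (Finsupp.single (∅ : Finset X) 1) = Finsupp.single (∅ : Finset X) 1 ∧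
  (∀ m : ℕ, Submodule.map F (clGrade R m) ≤ clGrade R (X := X) m) ∧
  (∀ x y : Finset X →₀ R, F (clWedge τ x y) = clWedge τ (F x) (F y))

/-!
Every identity is tested against the scalar product. Since `τ A A` is a unit for every blade `A`,
an element is determined by its scalar products with the basis blades, and the cocycle law of `τ`
makes `∧` adjoint to `⌞` and `⌟` adjoint to `∧` under `∗`:
`(x ∧ y) ∗ z = x ∗ (y ⌞ z)` and `(x ⌟ y) ∗ z = x ∗ (y ∧ z)`.
Consequently `F*(y ∧ x) = F* y ∧ F* x` as soon as `x ⌞ F w = F (F* x ⌞ w)` for all `w`, and the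
right-inner identity follows from the multiplicativity of `F*`.

The left-inner identity is first proved for vectors `v`, by induction on `w` along
`w ↦ e_a ∧ w`: for vectors, `v ⌞ ·` is an antiderivation of `∧`, and `v ⌞ F e_a = F* v ⌞ e_a`
because both are the scalar `v ∗ F e_a`. It then passes from `x` to `e_a ∧ x` through
`(x ∧ y) ⌞ z = x ⌞ (y ⌞ z)`, and since `e_A = ±e_a ∧ e_{A \ a}` it holds for all `x`.
That `F*` preserves grades follows from the orthogonality of distinct grades under `∗`.
-/

lemma Finset.singleton_symmDiff_of_notMem {α : Type*} [DecidableEq α] {a : α} {s : Finset α}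
    (h : a ∉ s) : symmDiff {a} s = insert a s := by
  ext x; by_cases x = a <;> simp_all [Finset.mem_symmDiff]

lemma Finset.singleton_symmDiff_of_mem {α : Type*} [DecidableEq α] {a : α} {s : Finset α}
    (h : a ∈ s) : symmDiff {a} s = s.erase a := by
  ext x; by_cases x = a <;> simp_all [Finset.mem_symmDiff]

namespace Grassmannian

variable {r : X → R} {τ : Finset X → Finset X → R}

lemma mul_self_eq_one (hτ : Grassmannian r τ) {A B : Finset X} (h : A ∩ B = ∅) :
    τ A B * τ A B = 1 := by
  obtain ⟨-, -, -, -, hsign⟩ := hτ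
  rcases hsign A B h with h' | h' <;> rw [h'] <;> ring

lemma singleton_insert_mul (hτ : Grassmannian r τ) {a : X} {D : Finset X} (ha : a ∉ D) :
    τ {a} (insert a D) * τ {a} D = r a := by
  obtain ⟨hsingle, -, hempty, hcocycle, -⟩ := hτ
  have h := hcocycle {a} {a} D
  rwa [symmDiff_self, Finset.bot_eq_empty, (hempty D).1, mul_one, hsingle,
    Finset.singleton_symmDiff_of_notMem ha, eq_comm] at h

lemma isUnit_self (hτ : Grassmannian r τ) (hnd : ∀ x : X, IsUnit (r x)) (A : Finset X) :
    IsUnit (τ A A) := by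
  obtain ⟨hsingle, -, hempty, hcocycle, -⟩ := hτ
  induction A using Finset.induction_on with
  | empty => rw [(hempty ∅).1]; exact isUnit_one
  | @insert a s ha ih =>
    have h₁ := hcocycle s s {a}
    rw [symmDiff_self, Finset.bot_eq_empty, (hempty {a}).1, mul_one] at h₁
    have h₂ := hcocycle {a} s (symmDiff {a} s)
    rw [symmDiff_comm {a} s, symmDiff_symmDiff_cancel_left, hsingle] at h₂
    rw [symmDiff_comm, Finset.singleton_symmDiff_of_notMem ha] at h₁ h₂
    have hs : IsUnit (τ s (insert a s)) := isUnit_of_mul_isUnit_left (h₁ ▸ ih)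
    exact isUnit_of_mul_isUnit_right (h₂ ▸ (hnd a).mul hs)

lemma singleton_swap (hτ : Grassmannian r τ) {a b : X} {C : Finset X}
    (ha : a ∈ C) (hb : b ∉ C) (hab : a ≠ b) :
    τ {b} C * τ {a} (insert b C) = -(τ {a} C * τ {b} (C.erase a)) := by
  set D := C.erase a
  have haD : a ∉ D := Finset.notMem_erase a C
  have hbD : b ∉ D := fun h => hb (Finset.mem_of_mem_erase h)
  have habD : a ∉ insert b D := by simp [hab, haD]
  have hC : insert a D = C := Finset.insert_erase ha
  have s₁ := hτ.mul_self_eq_one (Finset.singleton_inter_of_notMem haD)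
  have s₂ := hτ.mul_self_eq_one (Finset.singleton_inter_of_notMem habD)
  have i₁ := hτ.singleton_insert_mul habD
  have i₂ := hτ.singleton_insert_mul haD
  rw [Finset.insert_comm, hC] at i₁
  rw [hC] at i₂
  obtain ⟨-, hanti, -, hcocycle, -⟩ := hτ
  have c₁ := hcocycle {b} {a} D
  have c₂ := hcocycle {a} {b} D
  rw [symmDiff_comm ({b} : Finset X) {a}, hanti b a hab.symm,
    Finset.singleton_symmDiff_of_notMem haD, hC] at c₁
  rw [Finset.singleton_symmDiff_of_notMem hbD] at c₂
  -- `c₁ + c₂` gives `τ {b} C * τ {a} D = -τ {a} (insert b D) * τ {b} D`; the `iᵢ` trade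
  -- `τ {a} (insert b C)` and `τ {a} C` for `r a` times the signs `τ {a} (insert b D)`, `τ {a} D`.
  linear_combination -(τ {b} C * τ {a} (insert b C)) * s₂ + τ {b} C * τ {a} (insert b D) * i₁
    - τ {a} C * τ {b} D * s₁ + τ {b} D * τ {a} D * i₂
    + r a * τ {a} D * τ {a} (insert b D) * (-c₁ - c₂)
    - r a * τ {b} C * τ {a} (insert b D) * s₁ - r a * τ {b} D * τ {a} D * s₂

end Grassmannian

/-- The bilinear extension of `e_A • e_B = τ A B e_{A ∆ B}` if `P A B`, and `0` otherwise.
`clWedge`, `clLeftInner`, `clRightInner` and `clScalar` are the cases `A ∩ B = ∅`, `A ⊆ B`,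
`B ⊆ A` and `A = B`. -/
noncomputable def clBilin (P : Finset X → Finset X → Prop) [DecidableRel P]
    (τ : Finset X → Finset X → R) :
    (Finset X →₀ R) →ₗ[R] (Finset X →₀ R) →ₗ[R] (Finset X →₀ R) :=
  LinearMap.mk₂ R
    (fun f g => f.sum fun A a => g.sum fun B b =>
      if P A B then Finsupp.single (symmDiff A B) (a * b * τ A B) else 0)
    (fun f₁ f₂ g => by
      refine Finsupp.sum_add_index' (by simp) fun A a₁ a₂ => ?_
      rw [← Finsupp.sum_add]
      refine Finsupp.sum_congr fun B _ => ?_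
      split_ifs <;> simp [add_mul])
    (fun c f g => by
      rw [Finsupp.sum_smul_index (by simp), Finsupp.smul_sum]
      refine Finsupp.sum_congr fun A _ => ?_
      rw [Finsupp.smul_sum]
      refine Finsupp.sum_congr fun B _ => ?_
      split_ifs
      · rw [Finsupp.smul_single, smul_eq_mul, mul_assoc, mul_assoc, mul_assoc]
      · rw [smul_zero])
    (fun f g₁ g₂ => by
      rw [← Finsupp.sum_add]
      refine Finsupp.sum_congr fun A _ => ?_
      refine Finsupp.sum_add_index' (by simp) fun B b₁ b₂ => ?_
      split_ifs <;> simp [mul_add, add_mul])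
    (fun c f g => by
      rw [Finsupp.smul_sum]
      refine Finsupp.sum_congr fun A _ => ?_
      rw [Finsupp.sum_smul_index (by simp), Finsupp.smul_sum]
      refine Finsupp.sum_congr fun B _ => ?_
      split_ifs
      · rw [Finsupp.smul_single, smul_eq_mul]; ring_nf
      · rw [smul_zero])

section Bilinear

variable {τ : Finset X → Finset X → R}

lemma clBilin_single_single (P : Finset X → Finset X → Prop) [DecidableRel P]
    (A B : Finset X) (a b : R) :
    clBilin P τ (Finsupp.single A a) (Finsupp.single B b) =
      if P A B then Finsupp.single (symmDiff A B) (a * b * τ A B) else 0 := by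
  simp [clBilin]

lemma clBilin_congr {P Q : Finset X → Finset X → Prop} [DecidableRel P] [DecidableRel Q]
    {f g : Finset X →₀ R} (h : ∀ A ∈ f.support, ∀ B ∈ g.support, P A B ↔ Q A B) :
    clBilin P τ f g = clBilin Q τ f g := by
  simp only [clBilin, LinearMap.mk₂_apply]
  exact Finsupp.sum_congr fun A hA => Finsupp.sum_congr fun B hB => if_congr (h A hA B hB) rfl rfl

lemma clBilin_false (f g : Finset X →₀ R) : clBilin (fun _ _ => False) τ f g = 0 := by
  simp [clBilin]

lemma clBilin_assoc {r : X → R} (hτ : Grassmannian r τ) {P Q P' Q' : Finset X → Finset X → Prop}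
    [DecidableRel P] [DecidableRel Q] [DecidableRel P'] [DecidableRel Q']
    (hPQ : ∀ A B C, P A B ∧ Q (symmDiff A B) C ↔ Q' B C ∧ P' A (symmDiff B C))
    (x y z : Finset X →₀ R) :
    clBilin Q τ (clBilin P τ x y) z = clBilin P' τ x (clBilin Q' τ y z) := by
  induction x using Finsupp.induction_linear with
  | zero => simp
  | add x₁ x₂ h₁ h₂ => simp [h₁, h₂]
  | single A a => ?_
  induction y using Finsupp.induction_linear with
  | zero => simp
  | add y₁ y₂ h₁ h₂ => simp [h₁, h₂]
  | single B b => ?_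
  induction z using Finsupp.induction_linear with
  | zero => simp
  | add z₁ z₂ h₁ h₂ => simp [h₁, h₂]
  | single C c => ?_
  obtain ⟨-, -, -, hcocycle, -⟩ := hτ
  replace hPQ := hPQ A B C
  simp only [clBilin_single_single]
  by_cases h : P A B ∧ Q (symmDiff A B) C
  · obtain ⟨hP, hQ⟩ := h
    obtain ⟨hQ', hP'⟩ := hPQ.1 ⟨hP, hQ⟩
    simp only [hP, hQ, hQ', hP', if_true, clBilin_single_single, symmDiff_assoc]
    congr 1
    linear_combination a * b * c * hcocycle A B C
  · split_ifs <;> simp only [clBilin_single_single, map_zero, LinearMap.zero_apply] <;>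
      split_ifs <;> tauto

lemma clWedge_eq (f g : Finset X →₀ R) :
    clWedge τ f g = clBilin (fun A B => A ∩ B = ∅) τ f g := rfl

lemma clLeftInner_eq (f g : Finset X →₀ R) :
    clLeftInner τ f g = clBilin (· ⊆ ·) τ f g := rfl

lemma clRightInner_eq (f g : Finset X →₀ R) :
    clRightInner τ f g = clBilin (fun A B => B ⊆ A) τ f g := rfl

lemma clScalar_eq (f g : Finset X →₀ R) :
    clScalar τ f g = clBilin (· = ·) τ f g := by
  rw [clScalar, clBilin, LinearMap.mk₂_apply]
  refine Finsupp.sum_congr fun A _ => Finsupp.sum_congr fun B _ => ?_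
  split_ifs with h
  · rw [h, symmDiff_self]; rfl
  · rfl

end Bilinear

section Identities

variable {r : X → R} {τ : Finset X → Finset X → R}

lemma clScalar_comm (x y : Finset X →₀ R) : clScalar τ x y = clScalar τ y x := by
  simp only [clScalar_eq]
  induction x using Finsupp.induction_linear with
  | zero => simp
  | add x₁ x₂ h₁ h₂ => simp [h₁, h₂]
  | single A a => ?_
  induction y using Finsupp.induction_linear with
  | zero => simp
  | add y₁ y₂ h₁ h₂ => simp [h₁, h₂]
  | single B b => ?_
  simp only [clBilin_single_single, eq_comm (a := A)]
  split_ifs with h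
  · subst h; congr 1; ring
  · rfl

lemma clScalar_clWedge (hτ : Grassmannian r τ) (x y z : Finset X →₀ R) :
    clScalar τ (clWedge τ x y) z = clScalar τ x (clLeftInner τ y z) := by
  rw [clScalar_eq, clScalar_eq, clWedge_eq, clLeftInner_eq]
  refine clBilin_assoc hτ (fun A B C => ?_) x y z
  simp only [Finset.ext_iff, Finset.subset_iff, Finset.mem_symmDiff, Finset.mem_inter,
    Finset.notMem_empty, iff_false]
  grind

lemma clScalar_clRightInner (hτ : Grassmannian r τ) (x y z : Finset X →₀ R) :
    clScalar τ (clRightInner τ x y) z = clScalar τ x (clWedge τ y z) := by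
  rw [clScalar_eq, clScalar_eq, clRightInner_eq, clWedge_eq]
  refine clBilin_assoc hτ (fun A B C => ?_) x y z
  simp only [Finset.ext_iff, Finset.subset_iff, Finset.mem_symmDiff, Finset.mem_inter,
    Finset.notMem_empty, iff_false]
  grind

lemma clLeftInner_clWedge (hτ : Grassmannian r τ) (x y z : Finset X →₀ R) :
    clLeftInner τ (clWedge τ x y) z = clLeftInner τ x (clLeftInner τ y z) := by
  rw [clWedge_eq, clLeftInner_eq, clLeftInner_eq, clLeftInner_eq]
  refine clBilin_assoc hτ (fun A B C => ?_) x y z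
  simp only [Finset.ext_iff, Finset.subset_iff, Finset.mem_symmDiff, Finset.mem_inter,
    Finset.notMem_empty, iff_false]
  grind

end Identities

section Grade

variable {τ : Finset X → Finset X → R}

lemma card_eq_of_mem_clGrade {k : ℕ} {x : Finset X →₀ R} (hx : x ∈ clGrade R k) {A : Finset X}
    (hA : A ∈ x.support) : A.card = k :=
  (Finsupp.mem_supported R x).1 hx hA

lemma single_mem_clGrade (A : Finset X) (a : R) : Finsupp.single A a ∈ clGrade R A.card :=
  Finsupp.single_mem_supported R a rfl

lemma single_singleton_mem_clGrade_one (a : X) :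
    Finsupp.single ({a} : Finset X) (1 : R) ∈ clGrade R 1 := by
  simpa using single_mem_clGrade ({a} : Finset X) (1 : R)

lemma clGrade_one_eq_span :
    clGrade R 1 = Submodule.span R (Set.range fun a : X => Finsupp.single {a} (1 : R)) := by
  rw [clGrade, Finsupp.supported_eq_span_single]
  congr 1
  ext x
  simp [Finset.card_eq_one]

lemma clLeftInner_eq_clScalar_of_mem_clGrade {k : ℕ} {x y : Finset X →₀ R}
    (hx : x ∈ clGrade R k) (hy : y ∈ clGrade R k) : clLeftInner τ x y = clScalar τ x y := by
  rw [clLeftInner_eq, clScalar_eq]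
  refine clBilin_congr fun A hA B hB => ⟨fun hAB => ?_, fun hAB => hAB.subset⟩
  exact Finset.eq_of_subset_of_card_le hAB
    (by rw [card_eq_of_mem_clGrade hx hA, card_eq_of_mem_clGrade hy hB])

lemma clLeftInner_eq_zero_of_lt {k m : ℕ} {x y : Finset X →₀ R}
    (hx : x ∈ clGrade R k) (hy : y ∈ clGrade R m) (h : m < k) : clLeftInner τ x y = 0 := by
  rw [clLeftInner_eq, clBilin_congr (Q := fun _ _ => False), clBilin_false]
  intro A hA B hB
  simp only [iff_false]
  intro hAB
  have := Finset.card_le_card hAB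
  rw [card_eq_of_mem_clGrade hx hA, card_eq_of_mem_clGrade hy hB] at this
  omega

lemma clScalar_eq_zero_of_ne {k m : ℕ} {x y : Finset X →₀ R}
    (hx : x ∈ clGrade R k) (hy : y ∈ clGrade R m) (h : k ≠ m) : clScalar τ x y = 0 := by
  rw [clScalar_eq, clBilin_congr (Q := fun _ _ => False), clBilin_false]
  rintro A hA B hB
  simp only [iff_false]
  rintro rfl
  exact h ((card_eq_of_mem_clGrade hx hA).symm.trans (card_eq_of_mem_clGrade hy hB))

lemma clScalar_mem_clGrade_zero (x y : Finset X →₀ R) : clScalar τ x y ∈ clGrade R 0 :=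
  Submodule.sum_mem _ fun A _ => Submodule.sum_mem _ fun B _ => by
    dsimp only
    split_ifs
    · exact single_mem_clGrade ∅ _
    · exact zero_mem _

lemma clScalar_single_right (u : Finset X →₀ R) (B : Finset X) (b : R) :
    clScalar τ u (Finsupp.single B b) = Finsupp.single ∅ (u B * b * τ B B) := by
  simp only [clScalar, Finsupp.sum_single_index, mul_zero, zero_mul, Finsupp.single_zero,
    ite_self]
  rw [Finsupp.sum_ite_eq']
  split_ifs with hB
  · rfl
  · rw [Finsupp.notMem_support_iff.1 hB, zero_mul, zero_mul, Finsupp.single_zero]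

lemma eq_of_clScalar_single_eq {r : X → R} (hτ : Grassmannian r τ)
    (hnd : ∀ x : X, IsUnit (r x)) {u w : Finset X →₀ R}
    (h : ∀ B, clScalar τ u (Finsupp.single B 1) = clScalar τ w (Finsupp.single B 1)) :
    u = w := by
  ext B
  have hB := h B
  rw [clScalar_single_right, clScalar_single_right] at hB
  replace hB := Finsupp.single_injective _ hB
  rw [mul_one, mul_one] at hB
  exact (hτ.isUnit_self hnd B).mul_right_cancel hB

end Grade

section Blades

variable {r : X → R} {τ : Finset X → Finset X → R}

@[simp] lemma clWedge_zero_left (g : Finset X →₀ R) : clWedge τ 0 g = 0 := by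
  rw [clWedge_eq, map_zero, LinearMap.zero_apply]

@[simp] lemma clWedge_zero_right (f : Finset X →₀ R) : clWedge τ f 0 = 0 := by
  rw [clWedge_eq, map_zero]

@[simp] lemma clLeftInner_zero_right (f : Finset X →₀ R) : clLeftInner τ f 0 = 0 := by
  rw [clLeftInner_eq, map_zero]

lemma clWedge_single_empty (hτ : Grassmannian r τ) (c c' : R) (C : Finset X) :
    clWedge τ (Finsupp.single ∅ c) (Finsupp.single C c') = Finsupp.single C (c * c') := by
  obtain ⟨-, -, hempty, -, -⟩ := hτ
  rw [clWedge_eq, clBilin_single_single, if_pos (Finset.empty_inter C), (hempty C).1, mul_one,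
    show symmDiff ∅ C = C by simp]

lemma clLeftInner_single_empty (hτ : Grassmannian r τ) (g : Finset X →₀ R) :
    clLeftInner τ (Finsupp.single ∅ 1) g = g := by
  obtain ⟨-, -, hempty, -, -⟩ := hτ
  rw [clLeftInner_eq]
  induction g using Finsupp.induction_linear with
  | zero => rw [map_zero]
  | add g₁ g₂ h₁ h₂ => rw [map_add, h₁, h₂]
  | single B b =>
    rw [clBilin_single_single, if_pos (Finset.empty_subset B), (hempty B).1, one_mul, mul_one,
      show symmDiff ∅ B = B by simp]

lemma clWedge_single_singleton (a : X) (C : Finset X) (c : R) :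
    clWedge τ (Finsupp.single {a} 1) (Finsupp.single C c) =
      if a ∈ C then 0 else Finsupp.single (insert a C) (τ {a} C * c) := by
  rw [clWedge_eq, clBilin_single_single]
  by_cases ha : a ∈ C
  · rw [if_neg (by simp [ha]), if_pos ha]
  · rw [if_pos (Finset.singleton_inter_of_notMem ha), if_neg ha,
      Finset.singleton_symmDiff_of_notMem ha, one_mul, mul_comm]

lemma clLeftInner_single_singleton (a : X) (C : Finset X) (c : R) :
    clLeftInner τ (Finsupp.single {a} 1) (Finsupp.single C c) =
      if a ∈ C then Finsupp.single (C.erase a) (τ {a} C * c) else 0 := by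
  rw [clLeftInner_eq, clBilin_single_single]
  by_cases ha : a ∈ C
  · rw [if_pos (Finset.singleton_subset_iff.2 ha), if_pos ha,
      Finset.singleton_symmDiff_of_mem ha, one_mul, mul_comm]
  · rw [if_neg (by simpa using ha), if_neg ha]

lemma clLeftInner_clWedge_single (hτ : Grassmannian r τ) (a b : X) (C : Finset X) :
    clLeftInner τ (Finsupp.single {a} 1)
        (clWedge τ (Finsupp.single {b} 1) (Finsupp.single C 1)) =
      clWedge τ (clLeftInner τ (Finsupp.single {a} 1) (Finsupp.single {b} 1))
          (Finsupp.single C 1) -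
        clWedge τ (Finsupp.single {b} 1)
          (clLeftInner τ (Finsupp.single {a} 1) (Finsupp.single C 1)) := by
  rcases eq_or_ne a b with rfl | hab
  · simp only [clLeftInner_single_singleton a {a}, Finset.mem_singleton, if_true,
      Finset.erase_singleton, hτ.1, clWedge_single_empty hτ]
    by_cases ha : a ∈ C
    · have h := hτ.singleton_insert_mul (Finset.notMem_erase a C)
      rw [Finset.insert_erase ha] at h
      simp only [clWedge_single_singleton, clLeftInner_single_singleton, ha, if_true,
        clLeftInner_zero_right, Finset.notMem_erase, if_false, Finset.insert_erase ha]
      rw [← Finsupp.single_sub, eq_comm, Finsupp.single_eq_zero, ← h]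
      ring
    · simp only [clWedge_single_singleton, clLeftInner_single_singleton, ha, if_false,
        Finset.mem_insert_self, if_true, Finset.erase_insert ha, clWedge_zero_right, sub_zero]
      congr 1
      linear_combination hτ.singleton_insert_mul ha
  · simp only [clLeftInner_single_singleton a {b}, Finset.mem_singleton, hab, if_false,
      clWedge_zero_left, zero_sub]
    by_cases hb : b ∈ C
    · by_cases ha : a ∈ C
      · simp [clWedge_single_singleton, clLeftInner_single_singleton, hb, ha, hab.symm]
      · simp [clWedge_single_singleton, clLeftInner_single_singleton, hb, ha]
    · by_cases ha : a ∈ C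
      · simp only [clWedge_single_singleton, clLeftInner_single_singleton, hb, ha, if_false,
          if_true, Finset.mem_insert_of_mem ha, Finset.mem_erase, and_false, mul_one,
          Finset.erase_insert_of_ne hab.symm, ← Finsupp.single_neg]
        congr 1
        linear_combination hτ.singleton_swap ha hb hab
      · simp [clWedge_single_singleton, clLeftInner_single_singleton, hb, ha, hab]

lemma clLeftInner_clWedge_of_mem_clGrade_one (hτ : Grassmannian r τ) {v u : Finset X →₀ R}
    (hv : v ∈ clGrade R 1) (hu : u ∈ clGrade R 1) (g : Finset X →₀ R) :
    clLeftInner τ v (clWedge τ u g) =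
      clWedge τ (clLeftInner τ v u) g - clWedge τ u (clLeftInner τ v g) := by
  rw [clGrade_one_eq_span] at hv hu
  induction hv using Submodule.span_induction with
  | mem _ hv => ?_
  | zero => simp [clWedge_eq, clLeftInner_eq]
  | add v₁ v₂ _ _ h₁ h₂ =>
    simp only [clWedge_eq, clLeftInner_eq, map_add, LinearMap.add_apply] at *
    rw [h₁, h₂]; abel
  | smul c v _ h =>
    simp only [clWedge_eq, clLeftInner_eq, map_smul, LinearMap.smul_apply] at *
    rw [h, smul_sub]
  obtain ⟨a, rfl⟩ := hv
  induction hu using Submodule.span_induction with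
  | mem _ hu => ?_
  | zero => simp [clWedge_eq, clLeftInner_eq]
  | add u₁ u₂ _ _ h₁ h₂ =>
    simp only [clWedge_eq, clLeftInner_eq, map_add, LinearMap.add_apply] at *
    rw [h₁, h₂]; abel
  | smul c u _ h =>
    simp only [clWedge_eq, clLeftInner_eq, map_smul, LinearMap.smul_apply] at *
    rw [h, smul_sub]
  obtain ⟨b, rfl⟩ := hu
  induction g using Finsupp.induction_linear with
  | zero => simp
  | add g₁ g₂ h₁ h₂ =>
    simp only [clWedge_eq, clLeftInner_eq, map_add] at *
    rw [h₁, h₂]; abel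
  | single C c => ?_
  have h := clLeftInner_clWedge_single hτ a b C
  rw [← mul_one c, ← smul_eq_mul, ← Finsupp.smul_single]
  simp only [clWedge_eq, clLeftInner_eq, map_smul] at *
  rw [h, smul_sub]

lemma clWedge_induction (hτ : Grassmannian r τ)
    {p : (Finset X →₀ R) → Prop} (one : p (Finsupp.single ∅ 1))
    (wedge : ∀ a x, p x → p (clWedge τ (Finsupp.single {a} 1) x))
    (add : ∀ x y, p x → p y → p (x + y)) (smul : ∀ (c : R) x, p x → p (c • x))
    (x : Finset X →₀ R) : p x := by
  have blade (C : Finset X) : p (Finsupp.single C 1) := by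
    induction C using Finset.induction_on with
    | empty => exact one
    | @insert a s ha ih =>
      have h := clWedge_single_singleton (τ := τ) a s 1
      rw [if_neg ha, mul_one] at h
      have hsq := hτ.mul_self_eq_one (Finset.singleton_inter_of_notMem ha)
      rw [← hsq, ← smul_eq_mul, ← Finsupp.smul_single, ← h]
      exact smul _ _ (wedge a _ ih)
  induction x using Finsupp.induction_linear with
  | zero => simpa using smul 0 _ one
  | add x y hx hy => exact add x y hx hy
  | single C c => simpa using smul c _ (blade C)

end Blades

def IsClAdjoint (τ : Finset X → Finset X → R)
    (F Fadj : (Finset X →₀ R) →ₗ[R] (Finset X →₀ R)) : Prop :=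
  ∀ x y, clScalar τ (Fadj x) y = clScalar τ x (F y)

namespace IsOutermorphism

variable {τ : Finset X → Finset X → R} {F : (Finset X →₀ R) →ₗ[R] (Finset X →₀ R)}

lemma map_eq_self_of_mem_clGrade_zero (hF : IsOutermorphism τ F) {x : Finset X →₀ R}
    (hx : x ∈ clGrade R 0) : F x = x := by
  have hx₀ : x = Finsupp.single ∅ (x ∅) := Finsupp.support_subset_singleton.1 fun A hA =>
    Finset.mem_singleton.2 (Finset.card_eq_zero.1 (card_eq_of_mem_clGrade hx hA))
  rw [hx₀, ← mul_one (x ∅), ← smul_eq_mul, ← Finsupp.smul_single, map_smul, hF.1]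

lemma map_mem_clGrade (hF : IsOutermorphism τ F) {k : ℕ} {x : Finset X →₀ R}
    (hx : x ∈ clGrade R k) : F x ∈ clGrade R k :=
  hF.2.1 k ⟨x, hx, rfl⟩

end IsOutermorphism

namespace IsClAdjoint

variable {r : X → R} {τ : Finset X → Finset X → R}
  {F Fadj : (Finset X →₀ R) →ₗ[R] (Finset X →₀ R)}

lemma clScalar_map_left (hadj : IsClAdjoint τ F Fadj) (x y : Finset X →₀ R) :
    clScalar τ (F x) y = clScalar τ x (Fadj y) := by
  rw [clScalar_comm, ← hadj, clScalar_comm]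

lemma adjoint_mem_clGrade (hτ : Grassmannian r τ) (hnd : ∀ x : X, IsUnit (r x))
    (hF : IsOutermorphism τ F) (hadj : IsClAdjoint τ F Fadj) {k : ℕ} {x : Finset X →₀ R}
    (hx : x ∈ clGrade R k) : Fadj x ∈ clGrade R k := by
  refine (Finsupp.mem_supported R _).2 fun B hB => ?_
  by_contra hBk
  have h := hadj x (Finsupp.single B 1)
  rw [clScalar_single_right, mul_one,
    clScalar_eq_zero_of_ne hx (hF.map_mem_clGrade (single_mem_clGrade B 1)) (Ne.symm hBk),
    Finsupp.single_eq_zero] at h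
  exact Finsupp.mem_support_iff.1 hB ((hτ.isUnit_self hnd B).mul_left_eq_zero.1 h)

lemma adjoint_one (hτ : Grassmannian r τ) (hnd : ∀ x : X, IsUnit (r x))
    (hF : IsOutermorphism τ F) (hadj : IsClAdjoint τ F Fadj) :
    Fadj (Finsupp.single ∅ 1) = Finsupp.single ∅ 1 := by
  refine eq_of_clScalar_single_eq hτ hnd fun B => ?_
  rw [hadj]
  rcases eq_or_ne B ∅ with rfl | hB
  · rw [hF.1]
  · have hB : 0 ≠ B.card := (Finset.card_pos.2 (Finset.nonempty_iff_ne_empty.2 hB)).ne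
    have h₀ := single_mem_clGrade (∅ : Finset X) (1 : R)
    have hB₁ := single_mem_clGrade B (1 : R)
    rw [clScalar_eq_zero_of_ne h₀ (hF.map_mem_clGrade hB₁) hB, clScalar_eq_zero_of_ne h₀ hB₁ hB]

lemma adjoint_clWedge_of_clLeftInner (hτ : Grassmannian r τ) (hnd : ∀ x : X, IsUnit (r x))
    (hadj : IsClAdjoint τ F Fadj) {x : Finset X →₀ R}
    (hx : ∀ w, clLeftInner τ x (F w) = F (clLeftInner τ (Fadj x) w)) (y : Finset X →₀ R) :
    Fadj (clWedge τ y x) = clWedge τ (Fadj y) (Fadj x) := by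
  refine eq_of_clScalar_single_eq hτ hnd fun B => ?_
  rw [hadj, clScalar_clWedge hτ, hx, ← hadj, clScalar_clWedge hτ]

lemma clLeftInner_map_of_mem_clGrade_one (hτ : Grassmannian r τ)
    (hnd : ∀ x : X, IsUnit (r x)) (hF : IsOutermorphism τ F) (hadj : IsClAdjoint τ F Fadj)
    {v : Finset X →₀ R} (hv : v ∈ clGrade R 1) (w : Finset X →₀ R) :
    clLeftInner τ v (F w) = F (clLeftInner τ (Fadj v) w) := by
  have hv' := hadj.adjoint_mem_clGrade hτ hnd hF hv
  induction w using clWedge_induction hτ with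
  | one =>
    have h₀ : Finsupp.single ∅ (1 : R) ∈ clGrade R 0 := single_mem_clGrade (∅ : Finset X) 1
    rw [hF.1, clLeftInner_eq_zero_of_lt hv h₀ one_pos, clLeftInner_eq_zero_of_lt hv' h₀ one_pos,
      map_zero]
  | wedge a x hx =>
    have ha := single_singleton_mem_clGrade_one (R := R) a
    have hFa := hF.map_mem_clGrade ha
    have hscalar : clLeftInner τ v (F (Finsupp.single {a} 1)) =
        F (clLeftInner τ (Fadj v) (Finsupp.single {a} 1)) := by
      rw [clLeftInner_eq_clScalar_of_mem_clGrade hv hFa, ← hadj,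
        clLeftInner_eq_clScalar_of_mem_clGrade hv' ha,
        hF.map_eq_self_of_mem_clGrade_zero (clScalar_mem_clGrade_zero _ _)]
    rw [hF.2.2, clLeftInner_clWedge_of_mem_clGrade_one hτ hv hFa,
      clLeftInner_clWedge_of_mem_clGrade_one hτ hv' ha, map_sub, hF.2.2, hF.2.2, hx, hscalar]
  | add x y hx hy => simp only [map_add, clLeftInner_eq] at *; rw [hx, hy]
  | smul c x hx => simp only [map_smul, clLeftInner_eq] at *; rw [hx]

lemma clLeftInner_map (hτ : Grassmannian r τ) (hnd : ∀ x : X, IsUnit (r x))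
    (hF : IsOutermorphism τ F) (hadj : IsClAdjoint τ F Fadj) (x w : Finset X →₀ R) :
    clLeftInner τ x (F w) = F (clLeftInner τ (Fadj x) w) := by
  induction x using clWedge_induction hτ generalizing w with
  | one =>
    rw [hadj.adjoint_one hτ hnd hF, clLeftInner_single_empty hτ, clLeftInner_single_empty hτ]
  | wedge a x hx =>
    rw [clLeftInner_clWedge hτ, hx, clLeftInner_map_of_mem_clGrade_one hτ hnd hF hadj
      (single_singleton_mem_clGrade_one a), hadj.adjoint_clWedge_of_clLeftInner hτ hnd hx,
      clLeftInner_clWedge hτ]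
  | add x y hx hy =>
    simp only [map_add, clLeftInner_eq, LinearMap.add_apply] at *; rw [hx, hy]
  | smul c x hx => simp only [map_smul, clLeftInner_eq, LinearMap.smul_apply] at *; rw [hx]

lemma adjoint_clWedge (hτ : Grassmannian r τ) (hnd : ∀ x : X, IsUnit (r x))
    (hF : IsOutermorphism τ F) (hadj : IsClAdjoint τ F Fadj) (x y : Finset X →₀ R) :
    Fadj (clWedge τ x y) = clWedge τ (Fadj x) (Fadj y) :=
  hadj.adjoint_clWedge_of_clLeftInner hτ hnd (hadj.clLeftInner_map hτ hnd hF y) x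

lemma clRightInner_map (hτ : Grassmannian r τ) (hnd : ∀ x : X, IsUnit (r x))
    (hF : IsOutermorphism τ F) (hadj : IsClAdjoint τ F Fadj) (x y : Finset X →₀ R) :
    clRightInner τ (F x) y = F (clRightInner τ x (Fadj y)) := by
  refine eq_of_clScalar_single_eq hτ hnd fun B => ?_
  rw [clScalar_clRightInner hτ, hadj.clScalar_map_left, hadj.adjoint_clWedge hτ hnd hF,
    ← clScalar_clRightInner hτ, ← hadj.clScalar_map_left]

end IsClAdjoint

theorem hestenes_theorem_general
    (r : X → R) (τ : Finset X → Finset X → R) (hτ : Grassmannian r τ)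
    (hnd : ∀ x : X, IsUnit (r x))
    (F Fadj : (Finset X →₀ R) →ₗ[R] (Finset X →₀ R))
    (hF : IsOutermorphism τ F)
    (hadj : ∀ x y : Finset X →₀ R, clScalar τ (Fadj x) y = clScalar τ x (F y)) :
    IsOutermorphism τ Fadj ∧
    (∀ x y : Finset X →₀ R, clLeftInner τ x (F y) = F (clLeftInner τ (Fadj x) y)) ∧
    (∀ x y : Finset X →₀ R, clRightInner τ (F x) y = F (clRightInner τ x (Fadj y))) := by
  have hadj' : IsClAdjoint τ F Fadj := hadj
  refine ⟨⟨hadj'.adjoint_one hτ hnd hF, ?_, hadj'.adjoint_clWedge hτ hnd hF⟩,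
    hadj'.clLeftInner_map hτ hnd hF, hadj'.clRightInner_map hτ hnd hF⟩
  rintro k _ ⟨x, hx, rfl⟩
  exact hadj'.adjoint_mem_clGrade hτ hnd hF hx

/-- **Hestenes' Theorem.** In a nondegenerate Clifford algebra (all signature values
invertible), if `F` is an outermorphism and `F*` is its adjoint, characterized by
`F*(x) ∗ y = x ∗ F(y)` for all `x, y`, then `F*` is also an outermorphism, and
`x ⌞ F(y) = F(F*(x) ⌞ y)` and `F(x) ⌟ y = F(x ⌟ F*(y))` for all `x, y`. -/
theorem hestenes_theorem [Fintype X]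
    (r : X → R) (τ : Finset X → Finset X → R) (hτ : Grassmannian r τ)
    (hnd : ∀ x : X, IsUnit (r x))
    (F Fadj : (Finset X →₀ R) →ₗ[R] (Finset X →₀ R))
    (hF : IsOutermorphism τ F)
    (hadj : ∀ x y : Finset X →₀ R, clScalar τ (Fadj x) y = clScalar τ x (F y)) :
    IsOutermorphism τ Fadj ∧
    (∀ x y : Finset X →₀ R, clLeftInner τ x (F y) = F (clLeftInner τ (Fadj x) y)) ∧
    (∀ x y : Finset X →₀ R, clRightInner τ (F x) y = F (clRightInner τ x (Fadj y))) :=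
  hestenes_theorem_general r τ hτ hnd F Fadj hF hadj
end

section
/- In a nondegenerate Clifford algebra, if an element x satisfies x* v = v x for all vectors v (where x* is the grade involution), then x is a scalar. -/
set_option maxHeartbeats 2000000

open CliffordAlgebra

section ZeroMaps

universe u v

variable {K : Type u} [Field K] {W V U : Type v}
variable [AddCommGroup W] [Module K W] [AddCommGroup V] [Module K V]
variable [AddCommGroup U] [Module K U]

/-- The algebra map between exterior algebras (as Clifford algebras of the zero form)
induced by a linear map. -/
noncomputable def zmap (j : W →ₗ[K] V) :
    CliffordAlgebra (0 : QuadraticForm K W) →ₐ[K] CliffordAlgebra (0 : QuadraticForm K V) :=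
  CliffordAlgebra.map { j with map_app' := fun _ => rfl }

theorem zmap_ι (j : W →ₗ[K] V) (w : W) :
    zmap j (ι (0 : QuadraticForm K W) w) = ι (0 : QuadraticForm K V) (j w) :=
  map_apply_ι _ _

theorem zmap_zmap (j : W →ₗ[K] V) (q : V →ₗ[K] W) (h : ∀ w, q (j w) = w)
    (a : CliffordAlgebra (0 : QuadraticForm K W)) : zmap q (zmap j a) = a := by
  induction a using CliffordAlgebra.induction with
  | algebraMap r => rw [AlgHom.commutes, AlgHom.commutes]
  | ι w => rw [zmap_ι, zmap_ι, h]
  | mul a b ha hb => rw [map_mul, map_mul, ha, hb]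
  | add a b ha hb => rw [map_add, map_add, ha, hb]

theorem involute_zmap (j : W →ₗ[K] V) (a : CliffordAlgebra (0 : QuadraticForm K W)) :
    involute (zmap j a) = zmap j (involute a) := by
  induction a using CliffordAlgebra.induction with
  | algebraMap r => rw [AlgHom.commutes, AlgHom.commutes involute, AlgHom.commutes involute,
      AlgHom.commutes]
  | ι w => rw [zmap_ι, involute_ι, involute_ι, map_neg, zmap_ι]
  | mul a b ha hb => rw [map_mul, map_mul involute, ha, hb, ← map_mul, map_mul involute]
  | add a b ha hb => rw [map_add, map_add involute, ha, hb, ← map_add, map_add involute]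

theorem zswap (v w : V) :
    ι (0 : QuadraticForm K V) v * ι (0 : QuadraticForm K V) w =
      -(ι (0 : QuadraticForm K V) w * ι (0 : QuadraticForm K V) v) := by
  rw [ι_mul_ι_comm]
  simp [QuadraticMap.polar]

theorem zmap_mul_ι (j : W →ₗ[K] V) (e : V) (a : CliffordAlgebra (0 : QuadraticForm K W)) :
    zmap j a * ι (0 : QuadraticForm K V) e =
      ι (0 : QuadraticForm K V) e * involute (zmap j a) := by
  induction a using CliffordAlgebra.induction with
  | algebraMap r =>
      rw [AlgHom.commutes, AlgHom.commutes involute, Algebra.commutes]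
  | ι w => rw [zmap_ι, involute_ι, mul_neg, zswap]
  | mul a b ha hb =>
      rw [map_mul, map_mul, mul_assoc, hb, ← mul_assoc, ha, mul_assoc]
  | add a b ha hb => rw [map_add, map_add, add_mul, mul_add, ha, hb]

theorem contract_zmap (j : W →ₗ[K] V) (d : Module.Dual K V)
    (a : CliffordAlgebra (0 : QuadraticForm K W)) :
    contractLeft d (zmap j a) = zmap j (contractLeft (d ∘ₗ j) a) := by
  induction a using CliffordAlgebra.left_induction with
  | algebraMap r =>
      rw [AlgHom.commutes, contractLeft_algebraMap, contractLeft_algebraMap, map_zero]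
  | add a b ha hb => rw [map_add, map_add, ha, hb, map_add, map_add]
  | ι_mul a w ha =>
      rw [map_mul, zmap_ι, contractLeft_ι_mul, contractLeft_ι_mul, ha, map_sub, map_smul,
        map_mul, zmap_ι]
      rfl

end ZeroMaps

section ExteriorAux

universe u v

/-- In an exterior algebra over a finite-dimensional vector space, an element all of whose
left contractions vanish is a scalar. Stated for `CliffordAlgebra 0`. -/
theorem exterior_contract_zero_is_scalar {K : Type u} [Field K] (n : ℕ) :
    ∀ {V : Type v} [AddCommGroup V] [Module K V] [FiniteDimensional K V],
      Module.finrank K V = n →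
      ∀ y : CliffordAlgebra (0 : QuadraticForm K V),
        (∀ d : Module.Dual K V, contractLeft d y = 0) →
        ∃ c : K, y = algebraMap K _ c := by
  induction n with
  | zero =>
      intro V _ _ _ hrank y hy
      have hsub : Subsingleton V := by
        rwa [Module.finrank_zero_iff (R := K)] at hrank
      clear hy
      induction y using CliffordAlgebra.induction with
      | algebraMap r => exact ⟨r, rfl⟩
      | ι v => exact ⟨0, by rw [Subsingleton.elim v 0, map_zero, map_zero]⟩
      | mul a b ha hb =>
          obtain ⟨c, rfl⟩ := ha; obtain ⟨c', rfl⟩ := hb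
          exact ⟨c * c', (map_mul _ _ _).symm⟩
      | add a b ha hb =>
          obtain ⟨c, rfl⟩ := ha; obtain ⟨c', rfl⟩ := hb
          exact ⟨c + c', (map_add _ _ _).symm⟩
  | succ n IH =>
      intro V _ _ _ hrank y hy
      have hV : Nontrivial V := by
        rw [← Module.finrank_pos_iff (R := K)]; omega
      obtain ⟨e, he⟩ := exists_ne (0 : V)
      obtain ⟨d', hd'⟩ : ∃ d' : Module.Dual K V, d' e ≠ 0 := by
        by_contra h
        push_neg at h
        exact he ((Module.forall_dual_apply_eq_zero_iff K e).mp h)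
      obtain ⟨d₀, hd₀⟩ : ∃ d₀ : Module.Dual K V, d₀ e = 1 :=
        ⟨(d' e)⁻¹ • d', by simp [inv_mul_cancel₀ hd']⟩
      obtain ⟨W, hWk, hmem, hrW⟩ :
          ∃ W : Submodule K V, (∀ w ∈ W, d₀ w = 0) ∧ (∀ v : V, v - d₀ v • e ∈ W) ∧
            Module.finrank K W = n := by
        refine ⟨LinearMap.ker d₀, fun w hw => hw, fun v => by
          simp [LinearMap.mem_ker, map_sub, map_smul, hd₀], ?_⟩
        have hsurj : Function.Surjective d₀ := by
          intro c
          exact ⟨c • e, by simp [hd₀]⟩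
        have := LinearMap.finrank_range_add_finrank_ker d₀
        rw [LinearMap.range_eq_top.mpr hsurj, finrank_top, Module.finrank_self, hrank] at this
        omega
      obtain ⟨p, hp⟩ : ∃ p : V →ₗ[K] W, ∀ v : V, (p v : V) = v - d₀ v • e :=
        ⟨LinearMap.codRestrict W (LinearMap.id - d₀.smulRight e) (fun v => by
          simpa using hmem v), fun v => by
            rw [LinearMap.codRestrict_apply]
            simp⟩
      have hpj : ∀ w : W, p (w : V) = w := by
        intro w
        have hw : d₀ (w : V) = 0 := hWk _ w.2
        apply Subtype.ext
        rw [hp, hw, zero_smul, sub_zero]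
      have hGF : ∀ a, zmap p (zmap W.subtype a) = a := fun a => zmap_zmap _ _ hpj a
      have hFinj : Function.Injective (zmap (K := K) W.subtype) := by
        intro a b h
        have := congrArg (zmap p) h
        rwa [hGF, hGF] at this
      -- decompose `y`
      have hdec : ∀ z : CliffordAlgebra (0 : QuadraticForm K V),
          ∃ a b, z = zmap W.subtype a + ι (0 : QuadraticForm K V) e * zmap W.subtype b := by
        intro z
        induction z using CliffordAlgebra.induction with
        | algebraMap r =>
            exact ⟨algebraMap K (CliffordAlgebra (0 : QuadraticForm K W)) r, 0,
              by rw [map_zero, mul_zero, add_zero, AlgHom.commutes]⟩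
        | ι v =>
            refine ⟨ι _ (p v), algebraMap K _ (d₀ v), ?_⟩
            rw [zmap_ι, AlgHom.commutes, ← Algebra.commutes (d₀ v), ← Algebra.smul_def,
              ← map_smul, ← map_add]
            congr 1
            simp only [Submodule.subtype_apply, hp]
            abel
        | mul z₁ z₂ h₁ h₂ =>
            obtain ⟨a, b, rfl⟩ := h₁
            obtain ⟨c, d2, rfl⟩ := h₂
            refine ⟨a * c, b * c + involute a * d2, ?_⟩
            have h4 : ι (0 : QuadraticForm K V) e * zmap W.subtype b *
                (ι (0 : QuadraticForm K V) e * zmap W.subtype d2) = 0 := by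
              rw [mul_assoc, ← mul_assoc (zmap W.subtype b), zmap_mul_ι, ← mul_assoc,
                ← mul_assoc, ι_sq_scalar]
              simp
            have h2' : zmap W.subtype a * (ι (0 : QuadraticForm K V) e * zmap W.subtype d2) =
                ι (0 : QuadraticForm K V) e * zmap W.subtype (involute a * d2) := by
              rw [← mul_assoc, zmap_mul_ι, involute_zmap, mul_assoc, ← map_mul]
            rw [add_mul, mul_add, mul_add, ← map_mul, h2', h4, add_zero, mul_assoc,
              ← map_mul, map_add, mul_add]
            abel
        | add z₁ z₂ h₁ h₂ =>
            obtain ⟨a, b, rfl⟩ := h₁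
            obtain ⟨c, d2, rfl⟩ := h₂
            refine ⟨a + c, b + d2, ?_⟩
            rw [map_add, map_add, mul_add]
            abel
      obtain ⟨a, b, rfl⟩ := hdec y
      have hd₀j : (d₀ ∘ₗ W.subtype) = 0 := by
        ext w
        exact hWk _ w.2
      -- from the d₀ contraction, b = 0
      have hb0 : b = 0 := by
        have h := hy d₀
        rw [map_add, contract_zmap, hd₀j, map_zero, LinearMap.zero_apply, map_zero, zero_add,
          contractLeft_ι_mul, hd₀, one_smul, contract_zmap, hd₀j, map_zero,
          LinearMap.zero_apply, map_zero, mul_zero, sub_zero] at h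
        have : zmap W.subtype b = zmap W.subtype 0 := by rw [h, map_zero]
        exact hFinj this
      subst hb0
      rw [map_zero, mul_zero, add_zero] at hy ⊢
      -- all contractions of a vanish
      have ha : ∀ d'' : Module.Dual K W, contractLeft d'' a = 0 := by
        intro d''
        have h := hy (d'' ∘ₗ p)
        rw [contract_zmap] at h
        have hdd : (d'' ∘ₗ p) ∘ₗ W.subtype = d'' := by
          ext w
          simp only [LinearMap.comp_apply, Submodule.subtype_apply]
          rw [hpj]
        rw [hdd] at h
        have : zmap W.subtype (contractLeft d'' a) = zmap W.subtype 0 := by rw [h, map_zero]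
        exact hFinj this
      obtain ⟨c, rfl⟩ := IH hrW a ha
      exact ⟨c, (AlgHom.commutes _ _)⟩

end ExteriorAux

/-- In a nondegenerate Clifford algebra over a field of characteristic ≠ 2, if an element
`x` satisfies `x* v = v x` for all vectors `v` (where `x*` is the grade involution),
then `x` is a scalar. -/
theorem central_twisted_element_is_scalar
    {K V : Type*} [Field K] [AddCommGroup V] [Module K V] [FiniteDimensional K V]
    (h2 : (2 : K) ≠ 0) (Q : QuadraticForm K V)
    (hQ : ∀ v : V, (∀ w : V, QuadraticMap.polar Q v w = 0) → v = 0)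
    (x : CliffordAlgebra Q)
    (hx : ∀ v : V,
      CliffordAlgebra.involute x * CliffordAlgebra.ι Q v = CliffordAlgebra.ι Q v * x) :
    ∃ c : K, x = algebraMap K (CliffordAlgebra Q) c := by
  have : Invertible (2 : K) := invertibleOfNonzero h2
  -- contraction as a twisted commutator
  have key : ∀ (v : V) (z : CliffordAlgebra Q),
      contractLeft (Q.polarBilin v) z = ι Q v * z - involute z * ι Q v := by
    intro v z
    induction z using CliffordAlgebra.left_induction with
    | algebraMap r => simp [Algebra.commutes]
    | add a b ha hb =>
        simp only [map_add, ha, hb, mul_add, add_mul]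
        abel
    | ι_mul z m hz =>
        rw [contractLeft_ι_mul, hz, map_mul, involute_ι, ← mul_assoc, ι_mul_ι_comm,
          sub_mul, ← Algebra.smul_def]
        have hpm : Q.polarBilin v m = QuadraticMap.polar Q v m := rfl
        rw [hpm]
        simp only [mul_sub, sub_mul, neg_mul, mul_neg, mul_assoc]
        abel
  -- all contractions of x vanish
  have hc0 : ∀ d : Module.Dual K V, contractLeft d x = 0 := by
    have hinj : Function.Injective (Q.polarBilin : V →ₗ[K] Module.Dual K V) := by
      rw [← LinearMap.ker_eq_bot, LinearMap.ker_eq_bot']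
      intro v hv
      exact hQ v fun w => by
        have := congrFun (congrArg DFunLike.coe hv) w
        simpa using this
    have hsurj : Function.Surjective (Q.polarBilin : V →ₗ[K] Module.Dual K V) := by
      rw [← LinearMap.range_eq_top]
      apply Submodule.eq_top_of_finrank_eq
      rw [LinearMap.finrank_range_of_inj hinj, Subspace.dual_finrank_eq]
    intro d
    obtain ⟨v, rfl⟩ := hsurj d
    rw [key, hx v, sub_self]
  -- transport to the exterior algebra
  let y : CliffordAlgebra (0 : QuadraticForm K V) := equivExterior Q x
  have hy : ∀ d : Module.Dual K V, contractLeft d y = 0 := by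
    intro d
    have := changeForm_contractLeft (h := changeForm.associated_neg_proof (Q := Q)) d x
    rw [hc0, map_zero] at this
    exact this.symm
  obtain ⟨c, hc⟩ := exterior_contract_zero_is_scalar (Module.finrank K V) rfl y hy
  refine ⟨c, (equivExterior Q).injective ?_⟩
  have hsc : equivExterior Q (algebraMap K _ c) = algebraMap K _ c := by
    simp [equivExterior, changeFormEquiv]
  rw [hsc]
  exact hc
end

section
/- The norm function N(x) := x̄x, where x̄ is the Clifford conjugate, restricts to a group homomorphism from the Lipschitz group Γ̃ = {x invertible : x* V x^{−1} ⊆ V} to the multiplicative group of nonzero scalars; that is, N(x) is a nonzero scalar for x ∈ Γ̃ and N(xy) = N(x)N(y) for all x, y ∈ Γ̃. -/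
variable {V : Type*} [AddCommGroup V] [Module ℝ V]

/-- The norm function `N(x) := x̄ x`, where `x̄` is the Clifford conjugate
(the composition of grade involution and reversion). -/
noncomputable def cliffNorm (Q : QuadraticForm ℝ V) (x : CliffordAlgebra Q) :
    CliffordAlgebra Q :=
  CliffordAlgebra.reverse (CliffordAlgebra.involute x) * x

/-- Membership in the Lipschitz group `Γ̃`: `u` is invertible and
`u* v u⁻¹ ∈ V` for all vectors `v`. -/
def MemLipschitzGroup (Q : QuadraticForm ℝ V) (u : (CliffordAlgebra Q)ˣ) : Prop :=
  ∀ v : V,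
    CliffordAlgebra.involute (u : CliffordAlgebra Q) * CliffordAlgebra.ι Q v *
        ((u⁻¹ : (CliffordAlgebra Q)ˣ) : CliffordAlgebra Q)
      ∈ LinearMap.range (CliffordAlgebra.ι Q)

/-!
For `u ∈ Γ̃`, applying the grade involution and the Clifford conjugation to the vector
`u* v u⁻¹` shows that `k = (u*)⁻¹ u` and `s = u†u` (`†` the reversion) both satisfy `x* v = v x`
for every vector `v`. Such an `x` is a scalar: `v x - x* v` is the left contraction of `x` by the
functional `polar v`, by nondegeneracy every functional has this form, and an element of the
exterior algebra (isomorphic to the Clifford algebra compatibly with contractions) killed by all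
contractions has degree `0`. Hence `N(u) = s* k` is a scalar, nonzero because `N(u)` is a unit,
and a scalar `N(u)` can be pulled out of `N(uw) = w̄ N(u) w`.
-/

namespace CliffordAlgebra

variable {R M : Type*} [CommRing R] [AddCommGroup M] [Module R M] {Q : QuadraticForm R M}

theorem contractLeft_mul_s18 (d : Module.Dual R M) (x y : CliffordAlgebra Q) :
    contractLeft d (x * y) = contractLeft d x * y + involute x * contractLeft d y := by
  induction x using CliffordAlgebra.left_induction with
  | algebraMap r =>
    rw [contractLeft_algebraMap_mul, contractLeft_algebraMap, zero_mul, zero_add,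
      AlgHom.commutes]
  | add x₁ x₂ h₁ h₂ =>
    rw [add_mul, map_add, h₁, h₂, map_add, add_mul, map_add, add_mul]
    abel
  | ι_mul x m h =>
    rw [mul_assoc, contractLeft_ι_mul, h, contractLeft_ι_mul, map_mul, involute_ι,
      mul_add, sub_mul, smul_mul_assoc]
    simp only [neg_mul, mul_assoc]
    abel

theorem ι_mul_sub_involute_mul_ι (v : M) (x : CliffordAlgebra Q) :
    ι Q v * x - involute x * ι Q v = contractLeft (Q.polarBilin v) x := by
  induction x using CliffordAlgebra.left_induction with
  | algebraMap r =>
    rw [contractLeft_algebraMap, AlgHom.commutes, Algebra.commutes, sub_self]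
  | add x₁ x₂ h₁ h₂ =>
    rw [map_add, map_add, ← h₁, ← h₂]
    noncomm_ring
  | ι_mul x m h =>
    rw [contractLeft_ι_mul, ← h, map_mul, involute_ι, QuadraticMap.polarBilin_apply_apply,
      Algebra.smul_def, ← ι_mul_ι_add_swap]
    noncomm_ring

theorem involute_eq_neg_of_mem_range_ι {y : CliffordAlgebra Q}
    (hy : y ∈ LinearMap.range (ι Q)) : involute y = -y := by
  obtain ⟨m, rfl⟩ := hy
  exact involute_ι m

theorem reverse_involute_eq_neg_of_mem_range_ι {y : CliffordAlgebra Q}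
    (hy : y ∈ LinearMap.range (ι Q)) : reverse (involute y) = -y := by
  obtain ⟨m, rfl⟩ := hy
  rw [involute_ι, map_neg, reverse_ι]

theorem involute_mem_adjoin_ι_image {s : Set M} {x : CliffordAlgebra Q}
    (hx : x ∈ Algebra.adjoin R (ι Q '' s)) : involute x ∈ Algebra.adjoin R (ι Q '' s) := by
  induction hx using Algebra.adjoin_induction with
  | mem y hy =>
    obtain ⟨b, hb, rfl⟩ := hy
    rw [involute_ι]
    exact neg_mem (Algebra.subset_adjoin ⟨b, hb, rfl⟩)
  | algebraMap r => rw [AlgHom.commutes]; exact Subalgebra.algebraMap_mem _ _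
  | add x y _ _ hx hy => rw [map_add]; exact add_mem hx hy
  | mul x y _ _ hx hy => rw [map_mul]; exact mul_mem hx hy

theorem contractLeft_eq_zero_of_mem_adjoin_ι_image {d : Module.Dual R M} {s : Set M}
    (hd : ∀ b ∈ s, d b = 0) {x : CliffordAlgebra Q} (hx : x ∈ Algebra.adjoin R (ι Q '' s)) :
    contractLeft d x = 0 := by
  induction hx using Algebra.adjoin_induction with
  | mem y hy =>
    obtain ⟨b, hb, rfl⟩ := hy
    rw [contractLeft_ι, hd b hb, map_zero]
  | algebraMap r => rw [contractLeft_algebraMap]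
  | add x y _ _ hx hy => rw [map_add, hx, hy, add_zero]
  | mul x y _ _ hx hy => rw [contractLeft_mul_s18, hx, hy, zero_mul, mul_zero, add_zero]

theorem adjoin_ι_image_eq_top {s : Set M} (hs : Submodule.span R s = ⊤) :
    Algebra.adjoin R (ι Q '' s) = ⊤ := by
  rw [eq_top_iff, ← adjoin_range_ι, Algebra.adjoin_le_iff]
  rintro _ ⟨v, rfl⟩
  have hv : ι Q v ∈ (Submodule.span R s).map (ι Q) := ⟨v, hs ▸ Submodule.mem_top, rfl⟩
  rw [Submodule.map_span] at hv
  exact Algebra.span_le_adjoin R _ hv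

end CliffordAlgebra

namespace ExteriorAlgebra

open CliffordAlgebra

variable {R M : Type*} [CommRing R] [AddCommGroup M] [Module R M]

theorem ι_mul_eq_involute_mul_ι (a : M) (x : ExteriorAlgebra R M) :
    ι R a * x = involute x * ι R a := by
  have h0 : QuadraticMap.polarBilin (0 : QuadraticForm R M) a = 0 := by
    ext w
    simp [QuadraticMap.polar]
  rw [← sub_eq_zero, ι_mul_sub_involute_mul_ι, h0, map_zero, LinearMap.zero_apply]

theorem mem_adjoin_ι_image_insert {a : M} {s : Set M} {x : ExteriorAlgebra R M}
    (hx : x ∈ Algebra.adjoin R (ι R '' insert a s)) :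
    ∃ y ∈ Algebra.adjoin R (ι R '' s), ∃ z ∈ Algebra.adjoin R (ι R '' s),
      x = y + ι R a * z := by
  induction hx using Algebra.adjoin_induction with
  | mem w hw =>
    obtain ⟨b, hb, rfl⟩ := hw
    rcases Set.mem_insert_iff.1 hb with rfl | hb
    · exact ⟨0, zero_mem _, 1, one_mem _, by rw [zero_add, mul_one]⟩
    · exact ⟨ι _ b, Algebra.subset_adjoin ⟨b, hb, rfl⟩, 0, zero_mem _,
        by rw [mul_zero, add_zero]⟩
  | algebraMap r =>
    exact ⟨algebraMap R _ r, Subalgebra.algebraMap_mem _ _, 0, zero_mem _,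
      by rw [mul_zero, add_zero]⟩
  | add x₁ x₂ _ _ ih₁ ih₂ =>
    obtain ⟨y₁, hy₁, z₁, hz₁, rfl⟩ := ih₁
    obtain ⟨y₂, hy₂, z₂, hz₂, rfl⟩ := ih₂
    exact ⟨y₁ + y₂, add_mem hy₁ hy₂, z₁ + z₂, add_mem hz₁ hz₂, by rw [mul_add]; abel⟩
  | mul x₁ x₂ _ _ ih₁ ih₂ =>
    obtain ⟨y₁, hy₁, z₁, hz₁, rfl⟩ := ih₁
    obtain ⟨y₂, hy₂, z₂, hz₂, rfl⟩ := ih₂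
    refine ⟨y₁ * y₂, mul_mem hy₁ hy₂, involute y₁ * z₂ + z₁ * y₂,
      add_mem (mul_mem (involute_mem_adjoin_ι_image hy₁) hz₂) (mul_mem hz₁ hy₂), ?_⟩
    have hsq : ι R a * ι R a = 0 := by
      rw [ι_sq_scalar, zero_apply, map_zero]
    have hswap (w : ExteriorAlgebra R M) : w * ι R a = ι R a * involute w := by
      rw [ι_mul_eq_involute_mul_ι, involute_involute]
    calc (y₁ + ι R a * z₁) * (y₂ + ι R a * z₂)
        = y₁ * y₂ + (y₁ * ι R a) * z₂ + ι R a * z₁ * y₂ + ι R a * (z₁ * ι R a) * z₂ := by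
          noncomm_ring
      _ = y₁ * y₂ + ι R a * (involute y₁ * z₂ + z₁ * y₂) := by
          rw [hswap y₁, hswap z₁, ← mul_assoc (ι R a) (ι R a), hsq]
          noncomm_ring

theorem exists_eq_algebraMap_of_mem_adjoin_basis {I : Type*} (b : Module.Basis I R M)
    (t : Finset I) {x : ExteriorAlgebra R M}
    (hx : x ∈ Algebra.adjoin R (ι R '' (b '' t)))
    (hdx : ∀ i ∈ t, contractLeft (b.coord i) x = 0) :
    ∃ c : R, x = algebraMap R _ c := by
  classical
  induction t using Finset.induction_on generalizing x with
  | empty =>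
    rw [Finset.coe_empty, Set.image_empty, Set.image_empty, Algebra.adjoin_empty] at hx
    obtain ⟨c, hc⟩ := Algebra.mem_bot.1 hx
    exact ⟨c, hc.symm⟩
  | @insert i t hi ih =>
    rw [Finset.coe_insert, Set.image_insert_eq] at hx
    obtain ⟨y, hy, z, hz, rfl⟩ := mem_adjoin_ι_image_insert hx
    have hcoord : ∀ w ∈ b '' t, b.coord i w = 0 := by
      rintro _ ⟨j, hj, rfl⟩
      rw [Module.Basis.coord_apply, Module.Basis.repr_self,
        Finsupp.single_eq_of_ne (by rintro rfl; exact hi hj)]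
    have hz0 : z = 0 := by
      simpa [contractLeft_mul_s18, contractLeft_eq_zero_of_mem_adjoin_ι_image hcoord hy,
        contractLeft_eq_zero_of_mem_adjoin_ι_image hcoord hz] using
        hdx i (Finset.mem_insert_self i t)
    subst hz0
    rw [mul_zero, add_zero] at hdx ⊢
    exact ih hy fun j hj => hdx j (Finset.mem_insert_of_mem hj)

theorem exists_eq_algebraMap_of_contractLeft_eq_zero [Module.Free R M] [Module.Finite R M]
    {x : ExteriorAlgebra R M} (hx : ∀ d : Module.Dual R M, contractLeft d x = 0) :
    ∃ c : R, x = algebraMap R _ c := by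
  classical
  let b := Module.Free.chooseBasis R M
  refine exists_eq_algebraMap_of_mem_adjoin_basis b Finset.univ ?_ fun i _ => hx _
  rw [Finset.coe_univ, Set.image_univ, adjoin_ι_image_eq_top b.span_eq]
  exact Algebra.mem_top

end ExteriorAlgebra

namespace CliffordAlgebra

section CommRing

variable {R M : Type*} [CommRing R] [AddCommGroup M] [Module R M] {Q : QuadraticForm R M}

theorem exists_eq_algebraMap_of_contractLeft_eq_zero [Invertible (2 : R)] [Module.Free R M]
    [Module.Finite R M] {x : CliffordAlgebra Q} (hx : ∀ d : Module.Dual R M, contractLeft d x = 0) :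
    ∃ c : R, x = algebraMap R _ c := by
  obtain ⟨c, hc⟩ := ExteriorAlgebra.exists_eq_algebraMap_of_contractLeft_eq_zero
    (x := equivExterior Q x) fun d => by
      rw [equivExterior, changeFormEquiv_apply, ← changeForm_contractLeft, hx, map_zero]
  refine ⟨c, (equivExterior Q).injective ?_⟩
  rw [hc, equivExterior, changeFormEquiv_apply, changeForm_algebraMap]

end CommRing

section Field

variable {K M : Type*} [Field K] [AddCommGroup M] [Module K M] [FiniteDimensional K M]
  {Q : QuadraticForm K M}

theorem _root_.QuadraticMap.polarBilin_surjective
    (hQ : ∀ v : M, (∀ w : M, QuadraticMap.polar Q v w = 0) → v = 0) :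
    Function.Surjective Q.polarBilin :=
  (LinearMap.injective_iff_surjective_of_finrank_eq_finrank Subspace.dual_finrank_eq.symm).1 <|
    (injective_iff_map_eq_zero _).2 fun v hv => hQ v fun w => LinearMap.congr_fun hv w

theorem exists_eq_algebraMap_of_involute_mul_ι [Invertible (2 : K)]
    (hQ : ∀ v : M, (∀ w : M, QuadraticMap.polar Q v w = 0) → v = 0) {x : CliffordAlgebra Q}
    (hx : ∀ v : M, involute x * ι Q v = ι Q v * x) :
    ∃ c : K, x = algebraMap K _ c := by
  refine exists_eq_algebraMap_of_contractLeft_eq_zero fun d => ?_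
  obtain ⟨v, rfl⟩ := QuadraticMap.polarBilin_surjective hQ d
  rw [← ι_mul_sub_involute_mul_ι, hx v, sub_self]

end Field

end CliffordAlgebra

open CliffordAlgebra

theorem isUnit_cliffNorm {Q : QuadraticForm ℝ V} (u : (CliffordAlgebra Q)ˣ) :
    IsUnit (cliffNorm Q ↑u) :=
  ((u.isUnit.map involute).map reverseOp).unop.mul u.isUnit

theorem cliffNorm_eq_involute_mul {Q : QuadraticForm ℝ V} (u : (CliffordAlgebra Q)ˣ) :
    cliffNorm Q ↑u = involute (reverse ↑u * (u : CliffordAlgebra Q)) *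
      (involute (↑u⁻¹ : CliffordAlgebra Q) * (u : CliffordAlgebra Q)) := by
  rw [cliffNorm, map_mul, ← reverse_involute, mul_assoc,
    ← mul_assoc (involute (u : CliffordAlgebra Q)), ← map_mul, Units.mul_inv, map_one, one_mul]

theorem cliffNorm_mul_of_eq_algebraMap {Q : QuadraticForm ℝ V} {x : CliffordAlgebra Q} {c : ℝ}
    (hx : cliffNorm Q x = algebraMap ℝ _ c) (y : CliffordAlgebra Q) :
    cliffNorm Q (x * y) = cliffNorm Q x * cliffNorm Q y := by
  calc cliffNorm Q (x * y) = reverse (involute y) * cliffNorm Q x * y := by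
        rw [cliffNorm, cliffNorm, map_mul, reverse.map_mul, mul_assoc, mul_assoc, mul_assoc]
    _ = cliffNorm Q x * cliffNorm Q y := by
        rw [hx, ← Algebra.commutes, mul_assoc, cliffNorm]

namespace MemLipschitzGroup

variable {Q : QuadraticForm ℝ V} {u : (CliffordAlgebra Q)ˣ}

theorem involute_mul_ι_mul_inv_eq_mul_ι_mul_involute (hu : MemLipschitzGroup Q u) (v : V) :
    involute (u : CliffordAlgebra Q) * ι Q v * (↑u⁻¹ : CliffordAlgebra Q) =
      ↑u * ι Q v * involute (↑u⁻¹ : CliffordAlgebra Q) := by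
  have h := involute_eq_neg_of_mem_range_ι (hu v)
  rw [map_mul, map_mul, involute_involute, involute_ι, mul_neg, neg_mul, neg_inj] at h
  exact h.symm

theorem involute_mul_ι_mul_inv_eq_reverse (hu : MemLipschitzGroup Q u) (v : V) :
    involute (u : CliffordAlgebra Q) * ι Q v * (↑u⁻¹ : CliffordAlgebra Q) =
      reverse (involute (↑u⁻¹ : CliffordAlgebra Q)) * ι Q v * reverse ↑u := by
  have h := reverse_involute_eq_neg_of_mem_range_ι (hu v)
  simp only [map_mul, reverse.map_mul, involute_involute, involute_ι, reverse_ι, map_neg,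
    mul_neg, neg_mul, neg_inj] at h
  rw [← h, mul_assoc]

theorem involute_involute_inv_mul_mul_ι (hu : MemLipschitzGroup Q u) (v : V) :
    involute (involute (↑u⁻¹ : CliffordAlgebra Q) * (u : CliffordAlgebra Q)) * ι Q v =
      ι Q v * (involute (↑u⁻¹ : CliffordAlgebra Q) * (u : CliffordAlgebra Q)) := by
  rw [map_mul, involute_involute]
  calc (↑u⁻¹ : CliffordAlgebra Q) * involute ↑u * ι Q v
      = ↑u⁻¹ * (involute ↑u * ι Q v * ↑u⁻¹) * ↑u := by
        simp only [mul_assoc, Units.inv_mul, mul_one]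
    _ = ↑u⁻¹ * (↑u * ι Q v * involute ↑u⁻¹) * ↑u := by
        rw [hu.involute_mul_ι_mul_inv_eq_mul_ι_mul_involute]
    _ = ι Q v * (involute ↑u⁻¹ * ↑u) := by
        simp only [← mul_assoc, Units.inv_mul, one_mul]

theorem involute_reverse_mul_mul_ι (hu : MemLipschitzGroup Q u) (v : V) :
    involute (reverse (u : CliffordAlgebra Q) * (u : CliffordAlgebra Q)) * ι Q v =
      ι Q v * (reverse (u : CliffordAlgebra Q) * (u : CliffordAlgebra Q)) := by
  have hrev : reverse (involute (u : CliffordAlgebra Q)) *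
      reverse (involute (↑u⁻¹ : CliffordAlgebra Q)) = 1 := by
    rw [← reverse.map_mul, ← map_mul, Units.inv_mul, map_one, reverse.map_one]
  rw [map_mul, ← reverse_involute]
  calc reverse (involute (u : CliffordAlgebra Q)) * involute ↑u * ι Q v
      = reverse (involute ↑u) * (involute ↑u * ι Q v * ↑u⁻¹) * ↑u := by
        simp only [mul_assoc, Units.inv_mul, mul_one]
    _ = reverse (involute ↑u) * (reverse (involute ↑u⁻¹) * ι Q v * reverse ↑u) * ↑u := by
        rw [hu.involute_mul_ι_mul_inv_eq_reverse]
    _ = ι Q v * (reverse ↑u * ↑u) := by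
        simp only [← mul_assoc, hrev, one_mul]

theorem exists_cliffNorm_eq_algebraMap [FiniteDimensional ℝ V]
    (hQ : ∀ v : V, (∀ w : V, QuadraticMap.polar Q v w = 0) → v = 0)
    (hu : MemLipschitzGroup Q u) :
    ∃ c : ℝ, c ≠ 0 ∧ cliffNorm Q ↑u = algebraMap ℝ (CliffordAlgebra Q) c := by
  obtain ⟨c₁, hc₁⟩ := exists_eq_algebraMap_of_involute_mul_ι hQ hu.involute_reverse_mul_mul_ι
  obtain ⟨c₂, hc₂⟩ :=
    exists_eq_algebraMap_of_involute_mul_ι hQ hu.involute_involute_inv_mul_mul_ι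
  have hN : cliffNorm Q ↑u = algebraMap ℝ _ (c₁ * c₂) := by
    rw [cliffNorm_eq_involute_mul, hc₁, hc₂, AlgHom.commutes, map_mul]
  refine ⟨c₁ * c₂, fun h0 => not_isUnit_zero (M₀ := CliffordAlgebra Q) ?_, hN⟩
  rw [← map_zero (algebraMap ℝ (CliffordAlgebra Q)), ← h0, ← hN]
  exact isUnit_cliffNorm u

end MemLipschitzGroup

theorem cliffNorm_lipschitz_general [FiniteDimensional ℝ V] (Q : QuadraticForm ℝ V)
    (hQ : ∀ v : V, (∀ w : V, QuadraticMap.polar Q v w = 0) → v = 0)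
    (u w : (CliffordAlgebra Q)ˣ)
    (hu : MemLipschitzGroup Q u) :
    (∃ c : ℝ, c ≠ 0 ∧ cliffNorm Q (u : CliffordAlgebra Q)
        = algebraMap ℝ (CliffordAlgebra Q) c) ∧
    cliffNorm Q ((u : CliffordAlgebra Q) * (w : CliffordAlgebra Q))
      = cliffNorm Q (u : CliffordAlgebra Q) * cliffNorm Q (w : CliffordAlgebra Q) := by
  obtain ⟨c, hc0, hc⟩ := hu.exists_cliffNorm_eq_algebraMap hQ
  exact ⟨⟨c, hc0, hc⟩, cliffNorm_mul_of_eq_algebraMap hc _⟩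

/-- The norm function `N(x) = x̄x` restricts to a group homomorphism from the Lipschitz
group `Γ̃ = {x invertible : x* V x⁻¹ ⊆ V}` of a nondegenerate real geometric algebra to
the multiplicative group of nonzero scalars: `N(x)` is a nonzero scalar for `x ∈ Γ̃`,
and `N(xy) = N(x)N(y)`. -/
theorem cliffNorm_lipschitz [FiniteDimensional ℝ V] (Q : QuadraticForm ℝ V)
    (hQ : ∀ v : V, (∀ w : V, QuadraticMap.polar Q v w = 0) → v = 0)
    (u w : (CliffordAlgebra Q)ˣ)
    (hu : MemLipschitzGroup Q u) (hw : MemLipschitzGroup Q w) :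
    (∃ c : ℝ, c ≠ 0 ∧ cliffNorm Q (u : CliffordAlgebra Q)
        = algebraMap ℝ (CliffordAlgebra Q) c) ∧
    cliffNorm Q ((u : CliffordAlgebra Q) * (w : CliffordAlgebra Q))
      = cliffNorm Q (u : CliffordAlgebra Q) * cliffNorm Q (w : CliffordAlgebra Q) :=
  cliffNorm_lipschitz_general Q hQ u w hu
end
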